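/- arXiv:2512.00372 — 4 statements merged into one kernel-verified Lean document; each statement's English description precedes it below -/
import Mathlib

section
/- For every integer l ≥ 1, the collection K_{n,l} refines K_n: every element of K_{n,l} is contained in some element of K_n, and every element of K_n is the union of the elements of K_{n,l} contained in it. -/
open Set Function

noncomputable section

abbrev E (n : ℕ) := EuclideanSpace ℝ (Fin n)

/-- `I^d × {0}^{n-d}` inside `ℝ^n`. -/
def IcubeD (n d : ℕ) : Set (E n) :=
  {x | (∀ i : Fin n, (i : ℕ) < d → x i ∈ Icc (-1 : ℝ) 1) ∧
       ∀ i : Fin n, d ≤ (i : ℕ) → x i = 0}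

/-- The cube `I^n = [-1,1]^n`. -/
def Icube (n : ℕ) : Set (E n) := IcubeD n n

/-- `H^d_{ij}(a,b) = {x ∈ I^d × {0}^{n-d} : a·x_i ≥ b·x_j}`. -/
def HsetD (n d : ℕ) (i j : Fin n) (a b : ℝ) : Set (E n) :=
  {x ∈ IcubeD n d | b * x j ≤ a * x i}

def Hset (n : ℕ) (i j : Fin n) (a b : ℝ) : Set (E n) := HsetD n n i j a b

/-- The family `ℋ^d` of the sets `H^d_{ij}(a,b)`, `a, b ∈ {-1,1}`. -/
def HfamD (n d : ℕ) : Set (Set (E n)) :=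
  {H | ∃ i j : Fin n, (i : ℕ) < d ∧ (j : ℕ) < d ∧
      ∃ a b : ℝ, (a = 1 ∨ a = -1) ∧ (b = 1 ∨ b = -1) ∧ H = HsetD n d i j a b}

def Hfam (n : ℕ) : Set (Set (E n)) := HfamD n n

/-- Fundamental subsets of `ℋ^d`. -/
def IsFundSubsetD (n d : ℕ) (S : Set (Set (E n))) : Prop :=
  S ⊆ HfamD n d ∧
  ∀ i j : Fin n, (i : ℕ) < d → (j : ℕ) < d → i ≤ j →
    (HsetD n d i j 1 (-1) ∈ S ∨ HsetD n d i j (-1) 1 ∈ S) ∧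
    (HsetD n d i j 1 1 ∈ S ∨ HsetD n d i j (-1) (-1) ∈ S)

def IsFundSubset (n : ℕ) (S : Set (Set (E n))) : Prop := IsFundSubsetD n n S

/-- `K°_d` (realized inside `ℝ^n` on the slice `I^d × {0}^{n-d}`). -/
def KoD (n d : ℕ) : Set (Set (E n)) :=
  {K | ∃ S, IsFundSubsetD n d S ∧ K = ⋂₀ S}

/-- `K°_n`. -/
def Ko (n : ℕ) : Set (Set (E n)) := KoD n n

/-- Symmetries of the cube `I^n`. -/
def SymI (n : ℕ) (γ : E n → E n) : Prop :=
  Isometry γ ∧ Surjective γ ∧ γ '' Icube n = Icube n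

/-- Conformal affine maps `x ↦ λ U x + v`, `λ > 0`, `U ∈ O(n)`. -/
def ConfAffine (n : ℕ) (L : E n → E n) : Prop :=
  ∃ (c : ℝ) (U : E n ≃ₗᵢ[ℝ] E n) (v : E n), 0 < c ∧ ∀ x, L x = c • U x + v

/-- `d`-dimensional cubes in `ℝ^n` (for `d ≥ 1`). -/
def IsCube (n d : ℕ) (C : Set (E n)) : Prop :=
  ∃ L : E n → E n, ConfAffine n L ∧ L '' C = IcubeD n d

/-- `K°_d(C)` for a `d`-dimensional cube `C` (with `K°_0(C) = {C}`). -/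
def KoCube (n d : ℕ) (C : Set (E n)) : Set (Set (E n)) :=
  {K | (d = 0 ∧ K = C) ∨
       (1 ≤ d ∧ ∃ L : E n → E n, ConfAffine n L ∧ L '' C = IcubeD n d ∧
          ∃ H ∈ KoD n d, K = L ⁻¹' H)}

/-- Faces of `I^d × {0}^{n-d}` of dimension `e`. -/
def IsFaceD (n d : ℕ) (f : Set (E n)) (e : ℕ) : Prop :=
  ∃ J : Fin n → Set ℝ,
    (∀ i : Fin n, (i : ℕ) < d → (J i = Icc (-1 : ℝ) 1 ∨ J i = {-1} ∨ J i = {1})) ∧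
    (∀ i : Fin n, d ≤ (i : ℕ) → J i = {0}) ∧
    {i : Fin n | J i = Icc (-1 : ℝ) 1}.ncard = e ∧
    f = {x : E n | ∀ i, x i ∈ J i}

/-- `c` is a face of dimension `e` of the `d`-dimensional cube `C`. -/
def FaceOfCubeDim (n d : ℕ) (C c : Set (E n)) (e : ℕ) : Prop :=
  ∃ L : E n → E n, ConfAffine n L ∧ L '' C = IcubeD n d ∧
    ∃ f, IsFaceD n d f e ∧ c = L ⁻¹' f

/-- The symmetric decomposition `K_d(C)` of a `d`-dimensional cube `C`. -/
def KcalCube (n d : ℕ) (C : Set (E n)) : Set (Set (E n)) :=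
  {K | ∃ c e, FaceOfCubeDim n d C c e ∧ K ∈ KoCube n e c}

/-- `∂K_d(C)`: union of the `K°` of the proper faces of `C`. -/
def KcalBdCube (n d : ℕ) (C : Set (E n)) : Set (Set (E n)) :=
  {K | ∃ c e, FaceOfCubeDim n d C c e ∧ e < d ∧ K ∈ KoCube n e c}

/-- The symmetric decomposition `K_n` of `I^n`. -/
def Kcal (n : ℕ) : Set (Set (E n)) :=
  {K | ∃ c e, IsFaceD n n c e ∧ K ∈ KoCube n e c}

/-- `∂K_n`: union of the `K°` of the proper faces of `I^n`. -/
def KcalBdI (n : ℕ) : Set (Set (E n)) :=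
  {K | ∃ c e, IsFaceD n n c e ∧ e < n ∧ K ∈ KoCube n e c}

/-- `∂_∘ C`: the union of the proper faces of the `d`-cube `C`. -/
def cellBd (n d : ℕ) (C : Set (E n)) : Set (E n) :=
  ⋃₀ {c | ∃ e, e < d ∧ FaceOfCubeDim n d C c e}

/-- The cone `Cone(x, Y) = {x + t (y - x) : y ∈ Y, t ∈ [0,1]}`. -/
def Cone (n : ℕ) (x : E n) (Y : Set (E n)) : Set (E n) :=
  {z | ∃ y ∈ Y, ∃ t : ℝ, t ∈ Icc (0 : ℝ) 1 ∧ z = x + t • (y - x)}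

/-- Standard orthotopes `∏ [-a_i, a_i]`. -/
def StdOrtho (n : ℕ) (a : Fin n → ℝ) : Set (E n) :=
  {x | ∀ i, x i ∈ Icc (-(a i)) (a i)}

/-- `n`-dimensional orthotopes in `ℝ^n`. -/
def IsOrtho (n : ℕ) (R : Set (E n)) : Prop :=
  ∃ (L : E n → E n) (a : Fin n → ℝ), Isometry L ∧ Surjective L ∧
    (∀ i, 0 < a i) ∧ L '' R = StdOrtho n a

/-- The cubic-stretching of the standard orthotope `∏ [-a_i, a_i]`. -/
def stretch (n : ℕ) (a : Fin n → ℝ) : E n → E n :=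
  fun x => WithLp.toLp 2 (fun i => x i / a i)

/-- `K_n(R)` for an `n`-dimensional orthotope `R`. -/
def KcalOrtho (n : ℕ) (R : Set (E n)) : Set (Set (E n)) :=
  {K | ∃ (L : E n → E n) (a : Fin n → ℝ), Isometry L ∧ Surjective L ∧
      (∀ i, 0 < a i) ∧ L '' R = StdOrtho n a ∧
      ∃ H ∈ Kcal n, K = L ⁻¹' (stretch n a ⁻¹' H)}

/-- Faces of an `n`-dimensional orthotope `R`. -/
def FaceOfOrtho (n : ℕ) (R c : Set (E n)) : Prop :=
  ∃ (L : E n → E n) (a : Fin n → ℝ), Isometry L ∧ Surjective L ∧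
    (∀ i, 0 < a i) ∧ L '' R = StdOrtho n a ∧
    ∃ f e, IsFaceD n n f e ∧ c = L ⁻¹' (stretch n a ⁻¹' f)

/-- The center `x_α` of the subcube `C_α`. -/
def xalpha (n l : ℕ) (α : Fin n → ℕ) : E n :=
  WithLp.toLp 2 (fun i => (2 * (α i : ℝ) + 1 - (l : ℝ)) / (l : ℝ))

/-- `T_α(x) = l (x - x_α)`, mapping `C_α` onto `I^n`. -/
def Talpha (n l : ℕ) (α : Fin n → ℕ) : E n → E n :=
  fun x => (l : ℝ) • (x - xalpha n l α)

/-- The refined symmetric decomposition `K_{n,l}`. -/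
def Knl (n l : ℕ) : Set (Set (E n)) :=
  {K | ∃ α : Fin n → ℕ, (∀ i, α i < l) ∧ ∃ H ∈ Kcal n, K = Talpha n l α ⁻¹' H}

/-- `Γ` is a group of surjective isometries of `ℝ^n`. -/
def IsIsomGroup (n : ℕ) (Γ : Set (E n → E n)) : Prop :=
  (∀ γ ∈ Γ, Isometry γ ∧ Surjective γ) ∧ id ∈ Γ ∧
  (∀ γ ∈ Γ, ∀ γ' ∈ Γ, γ ∘ γ' ∈ Γ) ∧
  ∀ γ ∈ Γ, ∃ γ' ∈ Γ, γ ∘ γ' = id ∧ γ' ∘ γ = id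

/-- `D` is a fundamental domain of `Γ`. -/
def IsFundDom (n : ℕ) (Γ : Set (E n → E n)) (D : Set (E n)) : Prop :=
  (∃ U : Set (E n), U.Nonempty ∧ IsOpen U ∧ IsConnected U ∧ D = closure U) ∧
  (⋃ γ ∈ Γ, γ '' D) = univ ∧
  (∀ x : E n, ∃ V : Set (E n), x ∈ V ∧ IsOpen V ∧
    {γ ∈ Γ | ((γ '' D) ∩ V).Nonempty}.Finite) ∧
  ∀ γ ∈ Γ, γ ≠ id → interior D ∩ interior (γ '' D) = ∅

/-!
Every element of `K_n` is a *piece*: a face of `I^n` (some coordinates pinned to `±1`) cut by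
one closed side of each hyperplane `x i = ± x j` between free coordinates, and every such piece
is in `K_n`. The substance is rigidity: if `x ↦ c • U x + v` maps a face onto `I^e × {0}`, the
columns `c • U eᵢ` of the free coordinates have entries of absolute value summing to at most `1`
along each row (evaluate at the two points of the face with free coordinates `±` the signs of
that row) and to at most `c²` along each column (pair the column with the preimages of the two
opposite vertices given by its signs), while their squares sum to `c²` down each column. Hence
every entry is `0` or `±1`, and the map acts on the face as a signed permutation of coordinates.

Under `T_α` the form `a x i - b x j` becomes `a y i - b y j` plus an even integer, while
`|a y i - b y j| ≤ 2`. A nonzero shift therefore fixes the sign of the form on the whole subcube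
`C_α`, so each element of `K_{n,l}` lies on one side of every hyperplane `x i = ± x j`, that is,
in a full-dimensional piece. Conversely a point `x` of a piece `P` lies in some `C_α`, and the
smallest piece around `T_α x` pulls back into `P`: for the shift `0` the constraints of `P` are
inherited, and the extreme shifts force both coordinates to be pinned.
-/

namespace SymmDecomp

open scoped RealInnerProductSpace

lemma mem_Icube {n : ℕ} {x : E n} : x ∈ Icube n ↔ ∀ i, x i ∈ Icc (-1 : ℝ) 1 :=
  ⟨fun h i => h.1 i i.isLt, fun h => ⟨fun i _ => h i, fun i hi => absurd i.isLt hi.not_gt⟩⟩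

lemma coe_signType_mem_Icc (s : SignType) : (s : ℝ) ∈ Icc (-1 : ℝ) 1 := by
  rcases s with _ | _ | _ <;> norm_num

lemma coe_signType_eq_one_or_neg_one {s : SignType} (hs : s ≠ 0) :
    (s : ℝ) = 1 ∨ (s : ℝ) = -1 := by
  rcases s with _ | _ | _ <;> simp_all

lemma mul_eq_one_or_neg_one {a b : ℝ} (ha : a = 1 ∨ a = -1) (hb : b = 1 ∨ b = -1) :
    a * b = 1 ∨ a * b = -1 := by
  rcases ha with rfl | rfl <;> rcases hb with rfl | rfl <;> norm_num

lemma abs_eq_one_of_eq_one_or_neg_one {a : ℝ} (ha : a = 1 ∨ a = -1) : |a| = 1 := by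
  rcases ha with rfl | rfl <;> norm_num

lemma abs_mul_sub_mul_le_two {a b y z : ℝ} (ha : a = 1 ∨ a = -1) (hb : b = 1 ∨ b = -1)
    (hy : y ∈ Icc (-1 : ℝ) 1) (hz : z ∈ Icc (-1 : ℝ) 1) : |a * y - b * z| ≤ 2 := by
  rw [abs_le]
  rcases ha with rfl | rfl <;> rcases hb with rfl | rfl <;> constructor <;>
    linarith [hy.1, hy.2, hz.1, hz.2]

section Face

variable {n : ℕ}

def face (p : Fin n → SignType) : Set (E n) :=
  {x | ∀ i, x i ∈ Icc (-1 : ℝ) 1 ∧ (p i ≠ 0 → x i = p i)}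

lemma face_subset_Icube (p : Fin n → SignType) : face p ⊆ Icube n :=
  fun _ hx => mem_Icube.2 fun i => (hx i).1

def faceIntervals (p : Fin n → SignType) (i : Fin n) : Set ℝ :=
  if p i = 0 then Icc (-1) 1 else {(p i : ℝ)}

lemma faceIntervals_eq_Icc_iff (p : Fin n → SignType) (i : Fin n) :
    faceIntervals p i = Icc (-1) 1 ↔ p i = 0 := by
  refine ⟨fun h => by_contra fun hp => ?_, fun hp => if_pos hp⟩
  rw [faceIntervals, if_neg hp] at h
  have h0 : (0 : ℝ) ∈ ({(p i : ℝ)} : Set ℝ) :=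
    h ▸ (by norm_num : (0 : ℝ) ∈ Icc (-1 : ℝ) 1)
  rcases coe_signType_eq_one_or_neg_one hp with h1 | h1 <;> simp [h1] at h0

lemma face_eq_setOf_faceIntervals (p : Fin n → SignType) :
    face p = {x | ∀ i, x i ∈ faceIntervals p i} := by
  ext x
  refine forall_congr' fun i => ?_
  by_cases hp : p i = 0
  · simp [faceIntervals, hp]
  · have := coe_signType_mem_Icc (p i)
    simp only [faceIntervals, hp, if_false, mem_singleton_iff, ne_eq, not_false_eq_true,
      forall_const]
    exact ⟨And.right, fun h => ⟨h ▸ this, h⟩⟩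

lemma isFaceD_face (p : Fin n → SignType) :
    IsFaceD n n (face p) {i | p i = 0}.ncard := by
  refine ⟨faceIntervals p, fun i _ => ?_, fun i hi => absurd i.isLt hi.not_gt, ?_,
    face_eq_setOf_faceIntervals p⟩
  · unfold faceIntervals
    split_ifs with hp
    · exact Or.inl rfl
    · rcases coe_signType_eq_one_or_neg_one hp with h | h <;> simp [h]
  · simp only [faceIntervals_eq_Icc_iff]

lemma exists_face_of_isFaceD {c : Set (E n)} {e : ℕ} (hc : IsFaceD n n c e) :
    ∃ p : Fin n → SignType, c = face p ∧ {i | p i = 0}.ncard = e := by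
  obtain ⟨J, hJ, -, hcard, rfl⟩ := hc
  have key : ∀ i, ∃ s : SignType, J i = faceIntervals (fun _ => s) i := by
    intro i
    rcases hJ i i.isLt with h | h | h
    · exact ⟨0, by simp [faceIntervals, h]⟩
    · exact ⟨-1, by simp [faceIntervals, h]⟩
    · exact ⟨1, by simp [faceIntervals, h]⟩
  choose p hp using key
  have hJp : J = faceIntervals p := funext fun i => (hp i).trans (by simp [faceIntervals])
  subst hJp
  exact ⟨p, (face_eq_setOf_faceIntervals p).symm,
    by simpa only [faceIntervals_eq_Icc_iff] using hcard⟩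

def facePt (p : Fin n → SignType) (t : Fin n → ℝ) : E n :=
  WithLp.toLp 2 fun i => if p i = 0 then t i else (p i : ℝ)

@[simp] lemma facePt_apply (p : Fin n → SignType) (t : Fin n → ℝ) (i : Fin n) :
    facePt p t i = if p i = 0 then t i else (p i : ℝ) := rfl

lemma facePt_mem_face {p : Fin n → SignType} {t : Fin n → ℝ}
    (ht : ∀ i, p i = 0 → t i ∈ Icc (-1 : ℝ) 1) : facePt p t ∈ face p := by
  intro i
  by_cases hp : p i = 0
  · simp [hp, ht i hp]
  · simpa [hp] using coe_signType_mem_Icc (p i)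

end Face

section Piece

variable {n : ℕ}

def piece (p : Fin n → SignType) (T : Fin n → Fin n → ℝ → ℝ → Prop) : Set (E n) :=
  {x | x ∈ face p ∧ ∀ i j a b, T i j a b → b * x j ≤ a * x i}

/-- The condition defining fundamental subsets, read on the free coordinates of `face p`. -/
def IsValidPiece (p : Fin n → SignType) (T : Fin n → Fin n → ℝ → ℝ → Prop) : Prop :=
  (∀ i j a b, T i j a b → p i = 0 ∧ p j = 0 ∧ (a = 1 ∨ a = -1) ∧ (b = 1 ∨ b = -1)) ∧
  ∀ i j, p i = 0 → p j = 0 → ∀ b : ℝ, (b = 1 ∨ b = -1) →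
    ∃ a : ℝ, (a = 1 ∨ a = -1) ∧ T i j a (a * b)

lemma piece_subset_Icube (p : Fin n → SignType) (T : Fin n → Fin n → ℝ → ℝ → Prop) :
    piece p T ⊆ Icube n :=
  fun _ hx => face_subset_Icube p hx.1

def OneSided (K : Set (E n)) : Prop :=
  ∀ i j (b : ℝ), (b = 1 ∨ b = -1) →
    ∃ a : ℝ, (a = 1 ∨ a = -1) ∧ ∀ x ∈ K, 0 ≤ a * (x i - b * x j)

lemma oneSided_piece {p : Fin n → SignType} {T : Fin n → Fin n → ℝ → ℝ → Prop}
    (hv : IsValidPiece p T) : OneSided (piece p T) := by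
  intro i j b hb
  by_cases hi : p i = 0
  · by_cases hj : p j = 0
    · obtain ⟨a, ha, hT⟩ := hv.2 i j hi hj b hb
      exact ⟨a, ha, fun x hx => by nlinarith [hx.2 i j a (a * b) hT]⟩
    · refine ⟨-(b * p j), ?_, fun x hx => ?_⟩
      · rcases coe_signType_eq_one_or_neg_one hj with h | h <;> rcases hb with rfl | rfl <;>
          simp [h]
      · have hxi := (hx.1 i).1
        rw [(hx.1 j).2 hj]
        rcases coe_signType_eq_one_or_neg_one hj with h | h <;> rcases hb with rfl | rfl <;>
          simp only [h] <;> linarith [hxi.1, hxi.2]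
  · refine ⟨p i, coe_signType_eq_one_or_neg_one hi, fun x hx => ?_⟩
    have hxj := (hx.1 j).1
    rw [(hx.1 i).2 hi]
    rcases coe_signType_eq_one_or_neg_one hi with h | h <;> rcases hb with rfl | rfl <;>
      simp only [h] <;> linarith [hxj.1, hxj.2]

end Piece

def IsSignedCoordMap {n : ℕ} (p : Fin n → SignType) (e : ℕ) (L : E n → E n)
    (τ : Fin n → Fin n) (ε : Fin n → ℝ) : Prop :=
  ∀ k : Fin n, (k : ℕ) < e →
    p (τ k) = 0 ∧ (ε k = 1 ∨ ε k = -1) ∧ ∀ x ∈ face p, L x k = ε k * x (τ k)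

section Rigidity

variable {n e : ℕ} {p : Fin n → SignType} {L : E n → E n} {c : ℝ}
  {U : E n ≃ₗᵢ[ℝ] E n} {v : E n}

def freeCoords (p : Fin n → SignType) : Finset (Fin n) := Finset.univ.filter fun i => p i = 0

@[simp] lemma mem_freeCoords {i : Fin n} : i ∈ freeCoords p ↔ p i = 0 := by simp [freeCoords]

def col (c : ℝ) (U : E n ≃ₗᵢ[ℝ] E n) (i : Fin n) : E n :=
  c • U (EuclideanSpace.single i 1)

lemma sum_col_sq (c : ℝ) (U : E n ≃ₗᵢ[ℝ] E n) (i : Fin n) :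
    ∑ k, col c U i k ^ 2 = c ^ 2 := by
  rw [← EuclideanSpace.real_norm_sq_eq, col, norm_smul, LinearIsometryEquiv.norm_map]
  simp

lemma inner_col_smul (c : ℝ) (U : E n ≃ₗᵢ[ℝ] E n) (i : Fin n) (y : E n) :
    ⟪col c U i, c • U y⟫ = c ^ 2 * y i := by
  rw [col, inner_smul_left, inner_smul_right, LinearIsometryEquiv.inner_map_map,
    EuclideanSpace.inner_single_left]
  simp only [map_one, one_mul, RCLike.conj_to_real]
  ring

lemma apply_sub_apply (hL : ∀ x, L x = c • U x + v) (x x' : E n) :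
    L x - L x' = c • U (x - x') := by
  rw [hL, hL, map_sub, smul_sub]; abel

lemma apply_sub_apply_eq_sum (hL : ∀ x, L x = c • U x + v) (x x' : E n) (k : Fin n) :
    L x k - L x' k = ∑ i, (x i - x' i) * col c U i k := by
  have hU : U (x - x') = ∑ i, (x i - x' i) • U (EuclideanSpace.single i 1) := by
    conv_lhs => rw [← (EuclideanSpace.basisFun (Fin n) ℝ).sum_repr (x - x')]
    simp [map_sum, map_smul]
  rw [← PiLp.sub_apply, apply_sub_apply hL, hU, Finset.smul_sum]
  simp only [col, smul_smul, PiLp.smul_apply, WithLp.ofLp_sum, Finset.sum_apply, smul_eq_mul]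
  exact Finset.sum_congr rfl fun i _ => by ring

lemma apply_sub_apply_eq_sum_free (hL : ∀ x, L x = c • U x + v) {x x' : E n}
    (hx : x ∈ face p) (hx' : x' ∈ face p) (k : Fin n) :
    L x k - L x' k = ∑ i ∈ freeCoords p, (x i - x' i) * col c U i k := by
  rw [apply_sub_apply_eq_sum hL, freeCoords, Finset.sum_filter]
  refine Finset.sum_congr rfl fun i _ => ?_
  split_ifs with h
  · rfl
  · rw [(hx i).2 h, (hx' i).2 h, sub_self, zero_mul]

lemma apply_facePt_sub (hL : ∀ x, L x = c • U x + v) {t t' : Fin n → ℝ}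
    (ht : ∀ i, p i = 0 → t i ∈ Icc (-1 : ℝ) 1)
    (ht' : ∀ i, p i = 0 → t' i ∈ Icc (-1 : ℝ) 1) (k : Fin n) :
    L (facePt p t) k - L (facePt p t') k = ∑ i ∈ freeCoords p, (t i - t' i) * col c U i k := by
  rw [apply_sub_apply_eq_sum_free hL (facePt_mem_face ht) (facePt_mem_face ht')]
  refine Finset.sum_congr rfl fun i hi => ?_
  simp [mem_freeCoords.1 hi]

lemma pi_single_mem_Icc (f : Fin n) {s : ℝ} (hs : s ∈ Icc (-1 : ℝ) 1) (i : Fin n) :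
    (Pi.single f s : Fin n → ℝ) i ∈ Icc (-1 : ℝ) 1 := by
  rcases eq_or_ne i f with rfl | h <;> simp [*]

lemma apply_mem_IcubeD (himg : L '' face p = IcubeD n e) {x : E n} (hx : x ∈ face p) :
    L x ∈ IcubeD n e :=
  himg ▸ mem_image_of_mem L hx

lemma col_apply_eq_zero (hL : ∀ x, L x = c • U x + v) (himg : L '' face p = IcubeD n e)
    {f k : Fin n} (hf : p f = 0) (hk : e ≤ k) : col c U f k = 0 := by
  have ht : ∀ i, p i = 0 → (Pi.single f 1 : Fin n → ℝ) i ∈ Icc (-1 : ℝ) 1 :=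
    fun i _ => pi_single_mem_Icc f (by norm_num) i
  have h0 : ∀ i, p i = 0 → (0 : Fin n → ℝ) i ∈ Icc (-1 : ℝ) 1 := fun i _ => by simp
  have hzero : ∀ t, (∀ i, p i = 0 → t i ∈ Icc (-1 : ℝ) 1) → L (facePt p t) k = 0 :=
    fun t ht => (apply_mem_IcubeD himg (facePt_mem_face ht)).2 k hk
  have := apply_facePt_sub hL ht h0 k
  rw [hzero _ ht, hzero _ h0, Finset.sum_eq_single f] at this
  · simpa using this.symm
  · intro i _ hi; simp [hi]
  · simp [hf]

lemma sum_abs_col_le_one (hL : ∀ x, L x = c • U x + v) (himg : L '' face p = IcubeD n e)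
    {k : Fin n} (hk : (k : ℕ) < e) : ∑ i ∈ freeCoords p, |col c U i k| ≤ 1 := by
  set t : Fin n → ℝ := fun i => SignType.sign (col c U i k)
  have ht : ∀ i, p i = 0 → t i ∈ Icc (-1 : ℝ) 1 := fun i _ => coe_signType_mem_Icc _
  have ht' : ∀ i, p i = 0 → (-t) i ∈ Icc (-1 : ℝ) 1 := fun i hi => by
    simpa [and_comm, neg_le] using ht i hi
  have hdiff := apply_facePt_sub hL ht ht' k
  have hsum : ∑ i ∈ freeCoords p, (t i - (-t) i) * col c U i k =
      2 * ∑ i ∈ freeCoords p, |col c U i k| := by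
    rw [Finset.mul_sum]
    refine Finset.sum_congr rfl fun i _ => ?_
    rw [← sign_mul_self (col c U i k)]
    simp only [t, Pi.neg_apply]
    ring
  have h1 := (apply_mem_IcubeD himg (facePt_mem_face ht)).1 k hk
  have h2 := (apply_mem_IcubeD himg (facePt_mem_face ht')).1 k hk
  linarith [h1.2, h2.1]

lemma sum_abs_col_le_sq (hL : ∀ x, L x = c • U x + v) (himg : L '' face p = IcubeD n e)
    (f : Fin n) :
    ∑ k ∈ Finset.univ.filter (fun k : Fin n => (k : ℕ) < e), |col c U f k| ≤ c ^ 2 := by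
  set z : E n := WithLp.toLp 2 fun k => if (k : ℕ) < e then (SignType.sign (col c U f k) : ℝ)
    else 0
  have hz : z ∈ IcubeD n e :=
    ⟨fun k hk => by simpa [z, hk] using coe_signType_mem_Icc _,
      fun k hk => by simp [z, hk.not_gt]⟩
  have hz' : -z ∈ IcubeD n e :=
    ⟨fun k hk => by simpa [and_comm, neg_le] using hz.1 k hk, fun k hk => by simp [hz.2 k hk]⟩
  obtain ⟨x, hx, hxz⟩ := himg.symm ▸ hz
  obtain ⟨x', hx', hxz'⟩ := himg.symm ▸ hz'
  have hinner : ⟪col c U f, L x - L x'⟫ = c ^ 2 * (x f - x' f) := by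
    rw [apply_sub_apply hL, inner_col_smul, PiLp.sub_apply]
  have hinner' : ⟪col c U f, L x - L x'⟫ =
      2 * ∑ k ∈ Finset.univ.filter (fun k : Fin n => (k : ℕ) < e), |col c U f k| := by
    rw [hxz, hxz', sub_neg_eq_add, ← two_smul ℝ z, inner_smul_right, PiLp.inner_apply,
      Finset.sum_filter]
    congr 1
    refine Finset.sum_congr rfl fun k _ => ?_
    split_ifs with hk
    · rw [← sign_mul_self (col c U f k)]
      simp [z, hk, mul_comm]
    · simp [z, hk]
  have hxf := (hx f).1
  have hx'f := (hx' f).1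
  nlinarith [sq_nonneg c, hxf.1, hxf.2, hx'f.1, hx'f.2]

lemma col_apply_eq_zero_or_abs_eq_one (hL : ∀ x, L x = c • U x + v)
    (himg : L '' face p = IcubeD n e) {f k : Fin n} (hf : p f = 0) (hk : (k : ℕ) < e) :
    col c U f k = 0 ∨ |col c U f k| = 1 := by
  set A := Finset.univ.filter fun k : Fin n => (k : ℕ) < e
  have hle : ∀ k ∈ A, |col c U f k| ≤ 1 := fun k hk =>
    (Finset.single_le_sum (fun i _ => abs_nonneg (col c U i k)) (mem_freeCoords.2 hf)).trans
      (sum_abs_col_le_one hL himg (Finset.mem_filter.1 hk).2)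
  have hsq : ∑ k ∈ A, col c U f k ^ 2 = c ^ 2 := by
    rw [← sum_col_sq c U f, Finset.sum_filter]
    refine Finset.sum_congr rfl fun k _ => ?_
    split_ifs with hk
    · rfl
    · rw [col_apply_eq_zero hL himg hf (not_lt.1 hk)]; ring
  -- `col² ≤ |col|` termwise, while the sums are `c²` and at most `c²`: equality everywhere.
  have hterm : ∀ k ∈ A, 0 ≤ |col c U f k| - col c U f k ^ 2 := fun k hk => by
    rw [← sq_abs]; nlinarith [abs_nonneg (col c U f k), hle k hk]
  have hsum : ∑ k ∈ A, (|col c U f k| - col c U f k ^ 2) = 0 := by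
    refine le_antisymm ?_ (Finset.sum_nonneg hterm)
    rw [Finset.sum_sub_distrib, hsq]
    linarith [sum_abs_col_le_sq hL himg f]
  have h0 := (Finset.sum_eq_zero_iff_of_nonneg hterm).1 hsum k (by simp [A, hk])
  rw [← sq_abs] at h0
  have : |col c U f k| * (1 - |col c U f k|) = 0 := by linear_combination h0
  rcases mul_eq_zero.1 this with h | h
  · exact Or.inl (abs_eq_zero.1 h)
  · exact Or.inr (by linarith)

lemma exists_col_apply_ne_zero (hL : ∀ x, L x = c • U x + v)
    (himg : L '' face p = IcubeD n e) {k : Fin n} (hk : (k : ℕ) < e) :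
    ∃ f, p f = 0 ∧ col c U f k ≠ 0 := by
  by_contra! h
  have hmem : ∀ s : ℝ, s ∈ Icc (-1 : ℝ) 1 →
      WithLp.toLp 2 (Pi.single k s) ∈ IcubeD n e :=
    fun s hs => ⟨fun i _ => pi_single_mem_Icc k hs i,
      fun i hi => by simp [(show i ≠ k by omega)]⟩
  obtain ⟨x, hx, hxz⟩ := himg.symm ▸ hmem 1 (by norm_num)
  obtain ⟨x', hx', hxz'⟩ := himg.symm ▸ hmem (-1) (by norm_num)
  have := apply_sub_apply_eq_sum_free hL hx hx' k
  rw [Finset.sum_eq_zero fun i hi => by rw [h i (mem_freeCoords.1 hi), mul_zero], hxz,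
    hxz'] at this
  simp at this

lemma eq_of_col_apply_ne_zero (hL : ∀ x, L x = c • U x + v)
    (himg : L '' face p = IcubeD n e) {k f g : Fin n} (hk : (k : ℕ) < e) (hf : p f = 0)
    (hg : p g = 0) (hfk : col c U f k ≠ 0) (hgk : col c U g k ≠ 0) : f = g := by
  by_contra hfg
  have h1 := (col_apply_eq_zero_or_abs_eq_one hL himg hf hk).resolve_left hfk
  have h2 := (col_apply_eq_zero_or_abs_eq_one hL himg hg hk).resolve_left hgk
  have := (Finset.add_le_sum (fun i _ => abs_nonneg (col c U i k)) (mem_freeCoords.2 hf)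
    (mem_freeCoords.2 hg) hfg).trans (sum_abs_col_le_one hL himg hk)
  linarith

lemma apply_eq_add_col_mul (hL : ∀ x, L x = c • U x + v) (himg : L '' face p = IcubeD n e)
    {k f : Fin n} (hk : (k : ℕ) < e) (hf : p f = 0) (hfk : col c U f k ≠ 0) {x : E n}
    (hx : x ∈ face p) : L x k = L (facePt p 0) k + col c U f k * x f := by
  have h0 : ∀ i, p i = 0 → (0 : Fin n → ℝ) i ∈ Icc (-1 : ℝ) 1 := fun i _ => by simp
  have := apply_sub_apply_eq_sum_free hL hx (facePt_mem_face h0) k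
  rw [Finset.sum_eq_single f] at this
  · simp only [facePt_apply, hf, if_true, Pi.zero_apply, sub_zero] at this
    linarith
  · intro i hi hif
    by_contra hne
    exact hif (eq_of_col_apply_ne_zero hL himg hk (mem_freeCoords.1 hi) hf
      (right_ne_zero_of_mul hne) hfk)
  · exact fun h => absurd (mem_freeCoords.2 hf) h

lemma apply_eq_col_mul (hL : ∀ x, L x = c • U x + v) (himg : L '' face p = IcubeD n e)
    {k f : Fin n} (hk : (k : ℕ) < e) (hf : p f = 0) (hfk : col c U f k ≠ 0) {x : E n}
    (hx : x ∈ face p) : L x k = col c U f k * x f := by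
  have hpm : ∀ s : ℝ, s ∈ Icc (-1 : ℝ) 1 →
      L (facePt p 0) k + col c U f k * s ∈ Icc (-1 : ℝ) 1 := fun s hs => by
    have hmem := facePt_mem_face fun i (_ : p i = 0) => pi_single_mem_Icc f hs i
    have := (apply_mem_IcubeD himg hmem).1 k hk
    rwa [apply_eq_add_col_mul hL himg hk hf hfk hmem, facePt_apply, if_pos hf,
      Pi.single_eq_same] at this
  have h1 := hpm 1 (by norm_num)
  have h2 := hpm (-1) (by norm_num)
  have hbase : L (facePt p 0) k = 0 := by
    rcases abs_eq zero_le_one |>.1 <|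
        (col_apply_eq_zero_or_abs_eq_one hL himg hf hk).resolve_left hfk with hε | hε <;>
      rw [hε] at h1 h2 <;> linarith [h1.1, h1.2, h2.1, h2.2]
  rw [apply_eq_add_col_mul hL himg hk hf hfk hx, hbase, zero_add]

lemma exists_col_apply_ne_zero_of_free (hL : ∀ x, L x = c • U x + v)
    (himg : L '' face p = IcubeD n e) (hc : c ≠ 0) {i : Fin n} (hi : p i = 0) :
    ∃ k : Fin n, (k : ℕ) < e ∧ col c U i k ≠ 0 := by
  obtain ⟨k, hk⟩ : ∃ k, col c U i k ≠ 0 := by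
    by_contra! h
    have := sum_col_sq c U i
    simp only [h, ne_eq, OfNat.ofNat_ne_zero, not_false_eq_true, zero_pow,
      Finset.sum_const_zero] at this
    exact hc (pow_eq_zero_iff two_ne_zero |>.1 this.symm)
  exact ⟨k, not_le.1 fun hke => hk (col_apply_eq_zero hL himg hi hke), hk⟩

theorem exists_apply_eq_sign_mul (hL : ∀ x, L x = c • U x + v) (hc : c ≠ 0)
    (himg : L '' face p = IcubeD n e) :
    ∃ (τ : Fin n → Fin n) (ε : Fin n → ℝ),
      IsSignedCoordMap p e L τ ε ∧
        ∀ i, p i = 0 → ∃ k : Fin n, (k : ℕ) < e ∧ τ k = i := by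
  have hex : ∀ k : Fin n, ∃ f, (k : ℕ) < e → p f = 0 ∧ col c U f k ≠ 0 := fun k =>
    if hk : (k : ℕ) < e then (exists_col_apply_ne_zero hL himg hk).imp fun _ h _ => h
    else ⟨k, fun h => absurd h hk⟩
  choose τ hτ using hex
  refine ⟨τ, fun k => col c U (τ k) k, fun k hk => ?_, fun i hi => ?_⟩
  · obtain ⟨hf, hfk⟩ := hτ k hk
    exact ⟨hf, abs_eq zero_le_one |>.1 <|
      (col_apply_eq_zero_or_abs_eq_one hL himg hf hk).resolve_left hfk,
      fun x hx => apply_eq_col_mul hL himg hk hf hfk hx⟩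
  · obtain ⟨k, hk, hik⟩ := exists_col_apply_ne_zero_of_free hL himg hc hi
    exact ⟨k, hk, eq_of_col_apply_ne_zero hL himg hk (hτ k hk).1 hi (hτ k hk).2 hik⟩

end Rigidity

lemma HsetD_comm (n d : ℕ) (i j : Fin n) (a b : ℝ) :
    HsetD n d i j a b = HsetD n d j i (-b) (-a) := by
  ext x
  exact and_congr_right fun _ => by constructor <;> intro h <;> linarith

section FundSubset

variable {n e : ℕ} {S : Set (Set (E n))}

lemma IsFundSubsetD.exists_mem (hS : IsFundSubsetD n e S) {k m : Fin n} (hk : (k : ℕ) < e)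
    (hm : (m : ℕ) < e) {b : ℝ} (hb : b = 1 ∨ b = -1) :
    ∃ a : ℝ, (a = 1 ∨ a = -1) ∧ HsetD n e k m a (a * b) ∈ S := by
  rcases le_total k m with hkm | hmk
  · have h := hS.2 k m hk hm hkm
    rcases hb with rfl | rfl
    · rcases h.2 with h | h
      · exact ⟨1, Or.inl rfl, by simpa using h⟩
      · exact ⟨-1, Or.inr rfl, by simpa using h⟩
    · rcases h.1 with h | h
      · exact ⟨1, Or.inl rfl, by simpa using h⟩
      · exact ⟨-1, Or.inr rfl, by simpa using h⟩
  · have h := hS.2 m k hm hk hmk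
    simp only [HsetD_comm n e m k] at h
    rcases hb with rfl | rfl
    · rcases h.2 with h | h
      · exact ⟨-1, Or.inr rfl, by simpa using h⟩
      · exact ⟨1, Or.inl rfl, by simpa using h⟩
    · rcases h.1 with h | h
      · exact ⟨1, Or.inl rfl, by simpa using h⟩
      · exact ⟨-1, Or.inr rfl, by simpa using h⟩

lemma IsFundSubsetD.sInter_subset (hS : IsFundSubsetD n e S) {k : Fin n} (hk : (k : ℕ) < e) :
    ⋂₀ S ⊆ IcubeD n e := fun x hx => by
  rcases (hS.2 k k hk hk le_rfl).1 with h | h <;> exact (hx _ h).1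

end FundSubset

lemma injective_of_eq_smul_add {n : ℕ} {L : E n → E n} {c : ℝ} {U : E n ≃ₗᵢ[ℝ] E n}
    {v : E n} (hL : ∀ x, L x = c • U x + v) (hc : c ≠ 0) : Injective L := fun x y h => by
  rw [hL, hL] at h
  exact U.injective (smul_right_injective _ hc (add_right_cancel h))

lemma exists_perm_lt_iff {n : ℕ} (P : Fin n → Prop) [DecidablePred P] :
    ∃ σ : Equiv.Perm (Fin n), ∀ k : Fin n, (k : ℕ) < {i | P i}.ncard ↔ P (σ k) := by
  have hcard : Fintype.card {k : Fin n // (k : ℕ) < {i | P i}.ncard} =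
      Fintype.card {i // P i} := by
    rw [Fintype.card_fin_lt_of_le, ← Nat.card_coe_set_eq, Nat.card_eq_fintype_card]
    · rfl
    · simpa using Set.ncard_le_card {i | P i}
  let f := Fintype.equivOfCardEq hcard
  exact ⟨f.extendSubtype, fun k => ⟨f.extendSubtype_mem k,
    fun h => not_not.1 fun h' => f.extendSubtype_not_mem k h' h⟩⟩

section KcalPieces

variable {n e : ℕ} {p : Fin n → SignType} {L : E n → E n} {τ : Fin n → Fin n}
  {ε : Fin n → ℝ}

lemma forall_ne_zero_of_ncard_eq_zero (hp : {i | p i = 0}.ncard = 0) (i : Fin n) : p i ≠ 0 :=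
  fun hi => by
    simpa using ((Set.ncard_eq_zero (Set.toFinite _)).1 hp).subset
      (show i ∈ {i | p i = 0} from hi)

lemma piece_eq_face_of_forall_ne_zero {T : Fin n → Fin n → ℝ → ℝ → Prop}
    (hv : ∀ i j a b, T i j a b → p i = 0) (hp : ∀ i, p i ≠ 0) : piece p T = face p :=
  Subset.antisymm (fun _ hx => hx.1) fun _ hx =>
    ⟨hx, fun i _ _ _ hT => absurd (hv _ _ _ _ hT) (hp i)⟩

lemma mem_face_of_apply_mem (hinj : Injective L) (himg : L '' face p = IcubeD n e) {x : E n}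
    (hx : L x ∈ IcubeD n e) : x ∈ face p := by
  obtain ⟨y, hy, hyx⟩ := himg.symm ▸ hx
  rwa [← hinj hyx]

lemma IsSignedCoordMap.apply_mem_HsetD_iff (hL : IsSignedCoordMap p e L τ ε)
    (himg : L '' face p = IcubeD n e) {x : E n} (hx : x ∈ face p) {k m : Fin n}
    (hk : (k : ℕ) < e) (hm : (m : ℕ) < e) (a b : ℝ) :
    L x ∈ HsetD n e k m a b ↔ b * ε m * x (τ m) ≤ a * ε k * x (τ k) := by
  rw [HsetD, Set.mem_ofPred_eq, (hL k hk).2.2 x hx, (hL m hm).2.2 x hx, mul_assoc, mul_assoc]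
  exact and_iff_right (apply_mem_IcubeD himg hx)

def transportConstraints (e : ℕ) (S : Set (Set (E n))) (τ : Fin n → Fin n) (ε : Fin n → ℝ)
    (i j : Fin n) (a' b' : ℝ) : Prop :=
  ∃ (k m : Fin n) (a b : ℝ), (k : ℕ) < e ∧ (m : ℕ) < e ∧ (a = 1 ∨ a = -1) ∧
    (b = 1 ∨ b = -1) ∧ HsetD n e k m a b ∈ S ∧ τ k = i ∧ τ m = j ∧ a' = a * ε k ∧
    b' = b * ε m

lemma isValidPiece_transportConstraints {S : Set (Set (E n))} (hS : IsFundSubsetD n e S)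
    (hL : IsSignedCoordMap p e L τ ε)
    (hsurj : ∀ i, p i = 0 → ∃ k : Fin n, (k : ℕ) < e ∧ τ k = i) :
    IsValidPiece p (transportConstraints e S τ ε) := by
  refine ⟨?_, fun i j hi hj b₀ hb₀ => ?_⟩
  · rintro _ _ _ _ ⟨k, m, a, b, hk, hm, ha, hb, -, rfl, rfl, rfl, rfl⟩
    exact ⟨(hL k hk).1, (hL m hm).1, mul_eq_one_or_neg_one ha (hL k hk).2.1,
      mul_eq_one_or_neg_one hb (hL m hm).2.1⟩
  obtain ⟨k, hk, rfl⟩ := hsurj i hi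
  obtain ⟨m, hm, rfl⟩ := hsurj j hj
  have hεk := (hL k hk).2.1
  have hεm := (hL m hm).2.1
  have hb := mul_eq_one_or_neg_one (mul_eq_one_or_neg_one hb₀ hεk) hεm
  obtain ⟨a, ha, hmem⟩ := IsFundSubsetD.exists_mem hS hk hm hb
  refine ⟨a * ε k, mul_eq_one_or_neg_one ha hεk, k, m, a, _, hk, hm, ha,
    mul_eq_one_or_neg_one ha hb, hmem, rfl, rfl, rfl, ?_⟩
  rcases hεm with h | h <;> rw [h] <;> ring

lemma preimage_sInter_eq_piece {S : Set (Set (E n))} (hS : IsFundSubsetD n e S)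
    (hinj : Injective L) (himg : L '' face p = IcubeD n e) (hL : IsSignedCoordMap p e L τ ε)
    {k₀ : Fin n} (hk₀ : (k₀ : ℕ) < e) :
    L ⁻¹' ⋂₀ S = piece p (transportConstraints e S τ ε) := by
  ext x
  refine ⟨fun hx => ?_, fun ⟨hxf, hxT⟩ H hH => ?_⟩
  · have hxf := mem_face_of_apply_mem hinj himg (IsFundSubsetD.sInter_subset hS hk₀ hx)
    refine ⟨hxf, ?_⟩
    rintro _ _ _ _ ⟨k, m, a, b, hk, hm, -, -, hH, rfl, rfl, rfl, rfl⟩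
    exact (hL.apply_mem_HsetD_iff himg hxf hk hm a b).1 (hx _ hH)
  · obtain ⟨k, m, hk, hm, a, b, ha, hb, rfl⟩ := hS.1 hH
    exact (hL.apply_mem_HsetD_iff himg hxf hk hm a b).2
      (hxT _ _ _ _ ⟨k, m, a, b, hk, hm, ha, hb, hH, rfl, rfl, rfl, rfl⟩)

theorem exists_piece_eq_of_mem_Kcal {K : Set (E n)} (hK : K ∈ Kcal n) :
    ∃ p T, IsValidPiece p T ∧ K = piece p T := by
  obtain ⟨c, e, hface, hKo⟩ := hK
  obtain ⟨p, rfl, hcard⟩ := exists_face_of_isFaceD hface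
  rcases hKo with ⟨rfl, rfl⟩ |
    ⟨he, L, ⟨lam, U, v, hlam, hL⟩, himg, H, ⟨S, hS, rfl⟩, rfl⟩
  · have hp := forall_ne_zero_of_ncard_eq_zero hcard
    exact ⟨p, fun _ _ _ _ => False, ⟨fun _ _ _ _ h => h.elim, fun i _ hi => absurd hi (hp i)⟩,
      (piece_eq_face_of_forall_ne_zero (fun _ _ _ _ h => h.elim) hp).symm⟩
  obtain ⟨τ, ε, hτ, hsurj⟩ := exists_apply_eq_sign_mul hL hlam.ne' himg
  obtain ⟨i₀, hi₀⟩ := Set.nonempty_of_ncard_ne_zero (hcard ▸ (by omega : e ≠ 0))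
  obtain ⟨k₀, hk₀, -⟩ := hsurj i₀ hi₀
  exact ⟨p, _, isValidPiece_transportConstraints hS hτ hsurj,
    preimage_sInter_eq_piece hS (injective_of_eq_smul_add hL hlam.ne') himg hτ hk₀⟩

lemma exists_confAffine_image_face (p : Fin n → SignType) :
    ∃ (L : E n → E n) (σ : Equiv.Perm (Fin n)), ConfAffine n L ∧ Injective L ∧
      L '' face p = IcubeD n {i | p i = 0}.ncard ∧
      (∀ k : Fin n, (k : ℕ) < {i | p i = 0}.ncard ↔ p (σ k) = 0) ∧
      IsSignedCoordMap p {i | p i = 0}.ncard L σ 1 := by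
  set e := {i | p i = 0}.ncard
  obtain ⟨σ, hσ⟩ := exists_perm_lt_iff fun i => p i = 0
  set v : E n := WithLp.toLp 2 fun k => if (k : ℕ) < e then 0 else -(p (σ k) : ℝ)
  set U : E n ≃ₗᵢ[ℝ] E n := LinearIsometryEquiv.piLpCongrLeft 2 ℝ ℝ σ.symm
  have hLU : ∀ x, U x + v = (1 : ℝ) • U x + v := fun x => by rw [one_smul]
  have hL : ∀ x k, (U x + v) k = x (σ k) + v k := fun x k => by
    simp [U, LinearIsometryEquiv.piLpCongrLeft_apply]
  have hLfree : ∀ x (k : Fin n), (k : ℕ) < e → (U x + v) k = x (σ k) := fun x k hk => by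
    simp [hL, v, hk]
  refine ⟨fun x => U x + v, σ, ⟨1, U, v, one_pos, hLU⟩,
    injective_of_eq_smul_add hLU one_ne_zero, Subset.antisymm ?_ fun z hz => ?_, hσ,
    fun k hk => ⟨(hσ k).1 hk, Or.inl rfl,
    fun x _ => by rw [hLfree x k hk, Pi.one_apply, one_mul]⟩⟩
  · rintro _ ⟨x, hx, rfl⟩
    refine ⟨fun k hk => hLfree x k hk ▸ (hx (σ k)).1, fun k hk => ?_⟩
    have hpin : p (σ k) ≠ 0 := fun h => (not_lt.2 hk) ((hσ k).2 h)
    simp [hL, v, hk.not_gt, (hx (σ k)).2 hpin]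
  · refine ⟨facePt p fun i => z (σ.symm i), facePt_mem_face fun i hi => hz.1 _ ?_, ?_⟩
    · exact (hσ _).2 (by simpa using hi)
    · ext k
      by_cases hk : (k : ℕ) < e
      · rw [hLfree _ k hk]
        simp [(hσ k).1 hk]
      · simp [hL, v, hk, hz.2 k (not_lt.1 hk), (hσ k).not.1 hk]

lemma isFundSubsetD_of_isValidPiece {T : Fin n → Fin n → ℝ → ℝ → Prop}
    (hv : IsValidPiece p T) {σ : Equiv.Perm (Fin n)}
    (hσ : ∀ k : Fin n, (k : ℕ) < e ↔ p (σ k) = 0) :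
    IsFundSubsetD n e {H | ∃ (k m : Fin n) (a b : ℝ), (k : ℕ) < e ∧ (m : ℕ) < e ∧
      T (σ k) (σ m) a b ∧ H = HsetD n e k m a b} := by
  set S := {H | ∃ (k m : Fin n) (a b : ℝ), (k : ℕ) < e ∧ (m : ℕ) < e ∧
      T (σ k) (σ m) a b ∧ H = HsetD n e k m a b}
  refine ⟨?_, fun k m hk hm _ => ?_⟩
  · rintro _ ⟨k, m, a, b, hk, hm, hT, rfl⟩
    obtain ⟨-, -, ha, hb⟩ := hv.1 _ _ _ _ hT
    exact ⟨k, m, hk, hm, a, b, ha, hb, rfl⟩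
  have hfund : ∀ b : ℝ, (b = 1 ∨ b = -1) →
      HsetD n e k m 1 b ∈ S ∨ HsetD n e k m (-1) (-b) ∈ S := fun b hb => by
    obtain ⟨a, ha | ha, hT⟩ := hv.2 _ _ ((hσ k).1 hk) ((hσ m).1 hm) b hb <;> subst ha
    · exact Or.inl ⟨k, m, 1, b, hk, hm, by simpa using hT, rfl⟩
    · exact Or.inr ⟨k, m, -1, -b, hk, hm, by simpa using hT, rfl⟩
  simpa using And.intro (hfund (-1) (Or.inr rfl)) (hfund 1 (Or.inl rfl))

theorem piece_mem_Kcal {T : Fin n → Fin n → ℝ → ℝ → Prop} (hv : IsValidPiece p T) :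
    piece p T ∈ Kcal n := by
  refine ⟨face p, _, isFaceD_face p, ?_⟩
  rcases Nat.eq_zero_or_pos {i | p i = 0}.ncard with he | he
  · exact Or.inl ⟨he, piece_eq_face_of_forall_ne_zero (fun i j a b h => (hv.1 i j a b h).1)
      (forall_ne_zero_of_ncard_eq_zero he)⟩
  obtain ⟨L, σ, hconf, hinj, himg, hσ, hL⟩ := exists_confAffine_image_face p
  have hS := isFundSubsetD_of_isValidPiece hv hσ
  obtain ⟨i₀, hi₀⟩ := Set.nonempty_of_ncard_ne_zero he.ne'
  have hk₀ := (hσ (σ.symm i₀)).2 (by simpa using hi₀)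
  refine Or.inr ⟨he, L, hconf, himg, _, ⟨_, hS, rfl⟩, ?_⟩
  ext x
  refine ⟨fun ⟨hxf, hxT⟩ H hH => ?_, fun hx => ?_⟩
  · obtain ⟨k, m, a, b, hk, hm, hT, rfl⟩ := hH
    simpa using (hL.apply_mem_HsetD_iff himg hxf hk hm a b).2 (by simpa using hxT _ _ _ _ hT)
  · have hxf := mem_face_of_apply_mem hinj himg (IsFundSubsetD.sInter_subset hS hk₀ hx)
    refine ⟨hxf, fun i j a b hT => ?_⟩
    obtain ⟨hi, hj, -⟩ := hv.1 _ _ _ _ hT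
    have hi' := (hσ (σ.symm i)).2 (by simpa using hi)
    have hj' := (hσ (σ.symm j)).2 (by simpa using hj)
    simpa using (hL.apply_mem_HsetD_iff himg hxf hi' hj' a b).1
      (hx _ ⟨σ.symm i, σ.symm j, a, b, hi', hj', by simpa using hT, rfl⟩)

end KcalPieces

section Subcube

variable {n l : ℕ}

lemma Talpha_apply (hl : 0 < l) (α : Fin n → ℕ) (x : E n) (i : Fin n) :
    Talpha n l α x i = l * x i - (2 * α i + 1 - l) := by
  have : (l : ℝ) ≠ 0 := by positivity
  simp only [Talpha, xalpha, PiLp.smul_apply, PiLp.sub_apply, smul_eq_mul]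
  field_simp

lemma mem_Icube_of_Talpha_mem (hl : 0 < l) {α : Fin n → ℕ} (hα : ∀ i, α i < l) {x : E n}
    (hx : Talpha n l α x ∈ Icube n) : x ∈ Icube n := by
  refine mem_Icube.2 fun i => ?_
  have h := mem_Icube.1 hx i
  rw [Talpha_apply hl] at h
  have hαl : (α i : ℝ) + 1 ≤ l := by exact_mod_cast hα i
  have hl' : (0 : ℝ) < l := by exact_mod_cast hl
  constructor <;> nlinarith [h.1, h.2, (α i).cast_nonneg (α := ℝ)]

lemma exists_nat_le_le_add_one (hl : 0 < l) {s : ℝ} (hs₀ : 0 ≤ s) (hsl : s ≤ l) :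
    ∃ a : ℕ, a < l ∧ (a : ℝ) ≤ s ∧ s ≤ a + 1 := by
  by_cases h : ⌊s⌋₊ < l
  · exact ⟨⌊s⌋₊, h, Nat.floor_le hs₀, (Nat.lt_floor_add_one s).le⟩
  · refine ⟨l - 1, by omega, ?_, by push_cast [Nat.cast_sub hl]; linarith⟩
    have : (l : ℝ) ≤ s := (Nat.le_floor_iff hs₀).1 (not_lt.1 h)
    push_cast [Nat.cast_sub hl]
    linarith

lemma exists_Talpha_mem_Icube (hl : 0 < l) {x : E n} (hx : x ∈ Icube n) :
    ∃ α : Fin n → ℕ, (∀ i, α i < l) ∧ Talpha n l α x ∈ Icube n := by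
  have hl' : (0 : ℝ) < l := by exact_mod_cast hl
  have key : ∀ i, ∃ a : ℕ,
      a < l ∧ (a : ℝ) ≤ l * (x i + 1) / 2 ∧ l * (x i + 1) / 2 ≤ a + 1 :=
    fun i => have h := mem_Icube.1 hx i
      exists_nat_le_le_add_one hl (by nlinarith [h.1]) (by nlinarith [h.2])
  choose α hα using key
  refine ⟨α, fun i => (hα i).1, mem_Icube.2 fun i => ?_⟩
  rw [Talpha_apply hl]
  constructor <;> linarith [(hα i).2.1, (hα i).2.2]

lemma abs_Talpha_apply_eq_one (hl : 0 < l) {α : Fin n → ℕ} {x : E n} {i : Fin n}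
    (hα : α i < l) (hy : Talpha n l α x i ∈ Icc (-1 : ℝ) 1) (hx : |x i| = 1) :
    |Talpha n l α x i| = 1 := by
  have hαl : (α i : ℝ) + 1 ≤ l := by exact_mod_cast hα
  rw [Talpha_apply hl] at hy ⊢
  rw [abs_eq zero_le_one] at hx ⊢
  rcases hx with hx | hx <;> rw [hx] at hy ⊢
  · left; linarith [hy.2]
  · right; linarith [hy.1, (α i).cast_nonneg (α := ℝ)]

-- The shift is even because all the centres `2 * α i + 1 - l` have the parity of `l + 1`.
lemma exists_int_shift (hl : 0 < l) (α : Fin n → ℕ) {a b : ℝ} (ha : a = 1 ∨ a = -1)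
    (hb : b = 1 ∨ b = -1) (i j : Fin n) :
    ∃ m : ℤ, ∀ x : E n, l * (a * x i - b * x j) =
      a * Talpha n l α x i - b * Talpha n l α x j + 2 * m := by
  simp only [Talpha_apply hl]
  rcases ha with rfl | rfl <;> rcases hb with rfl | rfl
  · exact ⟨α i - α j, fun x => by push_cast; ring⟩
  · exact ⟨α i + α j + 1 - l, fun x => by push_cast; ring⟩
  · exact ⟨-(α i + α j + 1 - l), fun x => by push_cast; ring⟩
  · exact ⟨α j - α i, fun x => by push_cast; ring⟩

lemma OneSided.preimage_Talpha (hl : 0 < l) (α : Fin n → ℕ) {K : Set (E n)}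
    (hKI : K ⊆ Icube n) (hK : OneSided K) : OneSided (Talpha n l α ⁻¹' K) := by
  intro i j b hb
  have hl' : (0 : ℝ) < l := by exact_mod_cast hl
  obtain ⟨m, hm⟩ := exists_int_shift hl α (Or.inl rfl) hb i j
  have hbd : ∀ x ∈ Talpha n l α ⁻¹' K,
      |1 * Talpha n l α x i - b * Talpha n l α x j| ≤ 2 := fun x hx =>
    abs_mul_sub_mul_le_two (Or.inl rfl) hb (mem_Icube.1 (hKI hx) i) (mem_Icube.1 (hKI hx) j)
  rcases lt_trichotomy m 0 with hm0 | rfl | hm0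
  · refine ⟨-1, Or.inr rfl, fun x hx => ?_⟩
    have : (m : ℝ) ≤ -1 := by exact_mod_cast Int.le_sub_one_of_lt hm0
    nlinarith [hm x, (abs_le.1 (hbd x hx)).2]
  · obtain ⟨a, ha, hKa⟩ := hK i j b hb
    refine ⟨a, ha, fun x hx => ?_⟩
    have := hm x
    rw [Int.cast_zero, mul_zero, add_zero, one_mul, one_mul] at this
    have h := hKa _ hx
    rw [← this] at h
    rcases ha with rfl | rfl <;> nlinarith
  · refine ⟨1, Or.inl rfl, fun x hx => ?_⟩
    have : (1 : ℝ) ≤ m := by exact_mod_cast hm0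
    nlinarith [hm x, (abs_le.1 (hbd x hx)).1]

end Subcube

theorem exists_mem_Kcal_superset {n : ℕ} {K : Set (E n)} (hKI : K ⊆ Icube n) (hK : OneSided K) :
    ∃ K' ∈ Kcal n, K ⊆ K' := by
  set T : Fin n → Fin n → ℝ → ℝ → Prop := fun i j a b =>
    (a = 1 ∨ a = -1) ∧ (b = 1 ∨ b = -1) ∧ ∀ x ∈ K, b * x j ≤ a * x i
  have hv : IsValidPiece (fun _ => 0) T := by
    refine ⟨fun i j a b h => ⟨rfl, rfl, h.1, h.2.1⟩, fun i j _ _ b hb => ?_⟩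
    obtain ⟨a, ha, hKa⟩ := hK i j b hb
    exact ⟨a, ha, ha, mul_eq_one_or_neg_one ha hb, fun x hx => by nlinarith [hKa x hx]⟩
  refine ⟨_, piece_mem_Kcal hv, fun x hx => ⟨fun i => ⟨mem_Icube.1 (hKI hx) i, ?_⟩, ?_⟩⟩
  · exact fun h => absurd rfl h
  · exact fun i j a b h => h.2.2 x hx

section PieceAt

variable {n : ℕ}

def pinOf (y : E n) (i : Fin n) : SignType := if |y i| = 1 then SignType.sign (y i) else 0

lemma pinOf_eq_zero_iff {y : E n} {i : Fin n} : pinOf y i = 0 ↔ |y i| ≠ 1 := by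
  unfold pinOf
  split_ifs with h
  · have : y i ≠ 0 := fun h0 => by simp [h0] at h
    simp [this, h]
  · simp [h]

lemma coe_pinOf {y : E n} {i : Fin n} (h : |y i| = 1) : (pinOf y i : ℝ) = y i := by
  rw [pinOf, if_pos h]
  rcases abs_eq zero_le_one |>.1 h with h' | h' <;> simp [h']

def constraintsAt (y : E n) (i j : Fin n) (a b : ℝ) : Prop :=
  |y i| ≠ 1 ∧ |y j| ≠ 1 ∧ (a = 1 ∨ a = -1) ∧ (b = 1 ∨ b = -1) ∧ b * y j ≤ a * y i

-- The smallest piece containing `y`.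
def pieceAt (y : E n) : Set (E n) := piece (pinOf y) (constraintsAt y)

lemma isValidPiece_pieceAt (y : E n) : IsValidPiece (pinOf y) (constraintsAt y) := by
  refine ⟨fun i j a b h => ⟨pinOf_eq_zero_iff.2 h.1, pinOf_eq_zero_iff.2 h.2.1, h.2.2.1,
    h.2.2.2.1⟩, fun i j hi hj b hb => ?_⟩
  have hi' := pinOf_eq_zero_iff.1 hi
  have hj' := pinOf_eq_zero_iff.1 hj
  rcases le_total (b * y j) (y i) with h | h
  · exact ⟨1, Or.inl rfl, hi', hj', Or.inl rfl, by simpa using hb, by simpa using h⟩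
  · refine ⟨-1, Or.inr rfl, hi', hj', Or.inr rfl, ?_, by linarith⟩
    rcases hb with rfl | rfl <;> norm_num

lemma mem_pieceAt_self {y : E n} (hy : y ∈ Icube n) : y ∈ pieceAt y :=
  ⟨fun i => ⟨mem_Icube.1 hy i,
    fun h => (coe_pinOf (not_not.1 (mt pinOf_eq_zero_iff.2 h))).symm⟩,
    fun _ _ _ _ h => h.2.2.2.2⟩

lemma apply_eq_of_mem_pieceAt {y w : E n} (hw : w ∈ pieceAt y) {i : Fin n} (h : |y i| = 1) :
    w i = y i :=
  ((hw.1 i).2 (mt pinOf_eq_zero_iff.1 (not_not.2 h))).trans (coe_pinOf h)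

lemma nonneg_of_mem_pieceAt {y w : E n} (hy : y ∈ Icube n) (hw : w ∈ pieceAt y) {i j : Fin n}
    {a b : ℝ} (ha : a = 1 ∨ a = -1) (hb : b = 1 ∨ b = -1) (h : 0 ≤ a * y i - b * y j) :
    0 ≤ a * w i - b * w j := by
  have hyi := mem_Icube.1 hy i
  have hyj := mem_Icube.1 hy j
  have hwi := (hw.1 i).1
  have hwj := (hw.1 j).1
  by_cases hi : |y i| = 1 <;> by_cases hj : |y j| = 1
  · rwa [apply_eq_of_mem_pieceAt hw hi, apply_eq_of_mem_pieceAt hw hj]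
  · rw [apply_eq_of_mem_pieceAt hw hi]
    have := lt_of_le_of_ne (abs_le.2 hyj) hj
    rw [abs_lt] at this
    rcases abs_eq zero_le_one |>.1 hi with h' | h' <;> rw [h'] at h ⊢ <;>
      rcases ha with rfl | rfl <;> rcases hb with rfl | rfl <;> linarith [hwj.1, hwj.2]
  · rw [apply_eq_of_mem_pieceAt hw hj]
    have := lt_of_le_of_ne (abs_le.2 hyi) hi
    rw [abs_lt] at this
    rcases abs_eq zero_le_one |>.1 hj with h' | h' <;> rw [h'] at h ⊢ <;>
      rcases ha with rfl | rfl <;> rcases hb with rfl | rfl <;> linarith [hwi.1, hwi.2]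
  · linarith [hw.2 i j a b ⟨hi, hj, ha, hb, by linarith⟩]

lemma nonneg_add_of_mem_pieceAt {y w : E n} (hy : y ∈ Icube n) (hw : w ∈ pieceAt y)
    {i j : Fin n} {a b : ℝ} (ha : a = 1 ∨ a = -1) (hb : b = 1 ∨ b = -1) {m : ℤ}
    (h : 0 ≤ a * y i - b * y j + 2 * m) : 0 ≤ a * w i - b * w j + 2 * m := by
  have hyi := mem_Icube.1 hy i
  have hyj := mem_Icube.1 hy j
  rcases lt_trichotomy m 0 with hm | rfl | hm
  · -- the form `a * y i - b * y j` reaches its maximum `2`, so both coordinates are pinned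
    have hm' : (m : ℝ) ≤ -1 := by exact_mod_cast Int.le_sub_one_of_lt hm
    have hval : a * y i = 1 ∧ b * y j = -1 := by
      rcases ha with rfl | rfl <;> rcases hb with rfl | rfl <;> constructor <;>
        linarith [hyi.1, hyi.2, hyj.1, hyj.2]
    have hi : |y i| = 1 := by
      simpa [abs_mul, abs_eq_one_of_eq_one_or_neg_one ha] using congrArg abs hval.1
    have hj : |y j| = 1 := by
      simpa [abs_mul, abs_eq_one_of_eq_one_or_neg_one hb] using congrArg abs hval.2
    rwa [apply_eq_of_mem_pieceAt hw hi, apply_eq_of_mem_pieceAt hw hj]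
  · simpa using nonneg_of_mem_pieceAt hy hw ha hb (by simpa using h)
  · have : (1 : ℝ) ≤ m := by exact_mod_cast hm
    have := abs_mul_sub_mul_le_two ha hb (hw.1 i).1 (hw.1 j).1
    linarith [(abs_le.1 this).1]

end PieceAt

lemma preimage_pieceAt_subset {n l : ℕ} (hl : 0 < l) {p : Fin n → SignType}
    {T : Fin n → Fin n → ℝ → ℝ → Prop} (hv : IsValidPiece p T) {x : E n}
    (hx : x ∈ piece p T) {α : Fin n → ℕ} (hα : ∀ i, α i < l)
    (hy : Talpha n l α x ∈ Icube n) :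
    Talpha n l α ⁻¹' pieceAt (Talpha n l α x) ⊆ piece p T := by
  have hl' : (0 : ℝ) < l := by exact_mod_cast hl
  intro z hz
  have hzI := mem_Icube_of_Talpha_mem hl hα (piece_subset_Icube _ _ hz)
  refine ⟨fun i => ⟨mem_Icube.1 hzI i, fun hi => ?_⟩, fun i j a b hT => ?_⟩
  · have hxi := (hx.1 i).2 hi
    have hpin := abs_Talpha_apply_eq_one hl (hα i) (mem_Icube.1 hy i) <| by
      rw [hxi, abs_eq_one_of_eq_one_or_neg_one (coe_signType_eq_one_or_neg_one hi)]
    have := apply_eq_of_mem_pieceAt hz hpin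
    rw [Talpha_apply hl, Talpha_apply hl] at this
    rw [← hxi]
    exact mul_left_cancel₀ hl'.ne' (by linarith)
  · obtain ⟨-, -, ha, hb⟩ := hv.1 i j a b hT
    obtain ⟨m, hm⟩ := exists_int_shift hl α ha hb i j
    have hxab : 0 ≤ a * Talpha n l α x i - b * Talpha n l α x j + 2 * m := by
      rw [← hm]; nlinarith [hx.2 i j a b hT]
    exact sub_nonneg.1 <| nonneg_of_mul_nonneg_right
      (hm z ▸ nonneg_add_of_mem_pieceAt hy hz ha hb hxab) hl'

end SymmDecomp

open SymmDecomp

theorem stmt12_general (n : ℕ) (l : ℕ) (hl : 1 ≤ l) :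
    (∀ K ∈ Knl n l, ∃ K' ∈ Kcal n, K ⊆ K') ∧
    (∀ K' ∈ Kcal n, K' = ⋃₀ {K | K ∈ Knl n l ∧ K ⊆ K'}) := by
  refine ⟨?_, fun K' hK' => ?_⟩
  · rintro K ⟨α, hα, H, hH, rfl⟩
    obtain ⟨p, T, hv, rfl⟩ := exists_piece_eq_of_mem_Kcal hH
    exact exists_mem_Kcal_superset (fun x hx => mem_Icube_of_Talpha_mem hl hα
      (piece_subset_Icube p T hx))
      ((oneSided_piece hv).preimage_Talpha hl α (piece_subset_Icube p T))
  · obtain ⟨p, T, hv, rfl⟩ := exists_piece_eq_of_mem_Kcal hK'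
    refine Subset.antisymm (fun x hx => ?_) (sUnion_subset fun K hK => hK.2)
    obtain ⟨α, hα, hy⟩ := exists_Talpha_mem_Icube hl (piece_subset_Icube p T hx)
    exact ⟨_, ⟨⟨α, hα, _, piece_mem_Kcal (isValidPiece_pieceAt _), rfl⟩,
      preimage_pieceAt_subset hl hv hx hα hy⟩, mem_pieceAt_self hy⟩

/-- For every `l ≥ 1`, `K_{n,l}` refines `K_n`: every element of `K_{n,l}` is contained
in some element of `K_n`, and every element of `K_n` is the union of the elements of
`K_{n,l}` contained in it. -/
theorem stmt12 (n : ℕ) (hn : 1 ≤ n) (l : ℕ) (hl : 1 ≤ l) :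
    (∀ K ∈ Knl n l, ∃ K' ∈ Kcal n, K ⊆ K') ∧
    (∀ K' ∈ Kcal n, K' = ⋃₀ {K | K ∈ Knl n l ∧ K ⊆ K'}) :=
  stmt12_general n l hl
end
end

section
/- Let l ≥ 1 be an integer and α ∈ {0,…,l−1}^n, and let T_α(x) := l(x − x_α) with x_α := ((2α_1+1−l)/l, …, (2α_n+1−l)/l). Then for all i, j ∈ {1,…,n} and a, b ∈ {−1,1}, either T_α⁻¹(H^n_{ij}(a,b)) ⊆ H^n_{ij}(a,b) or T_α⁻¹(H^n_{ij}(a,b)) ⊆ H^n_{ij}(−a,−b). Consequently, for every H ∈ K°_n there exists H' ∈ K°_n with T_α⁻¹(H) ⊆ H'. -/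
open Set Function

noncomputable section

section Talpha

variable {n l : ℕ} {α : Fin n → ℕ}

lemma Talpha_apply (hl : (l : ℝ) ≠ 0) (x : E n) (k : Fin n) :
    Talpha n l α x k = l * x k - (2 * α k + 1 - l) := by
  simp only [Talpha, xalpha, PiLp.smul_apply, PiLp.sub_apply, smul_eq_mul]
  field_simp

lemma mem_Hset_iff {x : E n} {i j : Fin n} {a b : ℝ} :
    x ∈ Hset n i j a b ↔ (∀ k, x k ∈ Icc (-1 : ℝ) 1) ∧ b * x j ≤ a * x i := by
  simp [Hset, HsetD, IcubeD, Fin.is_lt]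

lemma Hset_mem_Hfam {i j : Fin n} {a b : ℝ} (ha : a = 1 ∨ a = -1) (hb : b = 1 ∨ b = -1) :
    Hset n i j a b ∈ Hfam n :=
  ⟨i, j, i.is_lt, j.is_lt, a, b, ha, hb, rfl⟩

lemma mem_Icc_of_Talpha_mem_Icc (hl : 1 ≤ l) (hα : ∀ k, α k < l) {x : E n} {k : Fin n}
    (hx : Talpha n l α x k ∈ Icc (-1 : ℝ) 1) : x k ∈ Icc (-1 : ℝ) 1 := by
  have hl0 : (0 : ℝ) < l := by exact_mod_cast hl
  have hαk : (α k : ℝ) + 1 ≤ l := by exact_mod_cast hα k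
  rw [Talpha_apply hl0.ne'] at hx
  obtain ⟨h₁, h₂⟩ := hx
  constructor <;> nlinarith [(Nat.cast_nonneg (α k) : (0 : ℝ) ≤ α k)]

lemma exists_int_eq_sign_combination {a b : ℝ} (ha : a = 1 ∨ a = -1) (hb : b = 1 ∨ b = -1)
    (p q r : ℕ) : ∃ k : ℤ, a * (2 * p + 1 - r) - b * (2 * q + 1 - r) = 2 * k := by
  rcases ha with rfl | rfl <;> rcases hb with rfl | rfl
  · exact ⟨p - q, by push_cast; ring⟩
  · exact ⟨p + q + 1 - r, by push_cast; ring⟩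
  · exact ⟨r - p - q - 1, by push_cast; ring⟩
  · exact ⟨q - p, by push_cast; ring⟩

lemma mul_mem_Icc_of_sign {a t : ℝ} (ha : a = 1 ∨ a = -1) (ht : t ∈ Icc (-1 : ℝ) 1) :
    a * t ∈ Icc (-1 : ℝ) 1 := by
  rcases ha with rfl | rfl <;> constructor <;> linarith [ht.1, ht.2]

/-- The centres of the subcubes have the same parity in every coordinate, so `l (a x_i - b x_j)`
differs from `a T_α(x)_i - b T_α(x)_j ∈ [-2, 2]` by an even integer `2k` independent of `x`:
for `k ≥ 0` the inequality `b x_j ≤ a x_i` is inherited, for `k ≤ -1` it is reversed. -/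
lemma preimage_Hset_subset_or (hl : 1 ≤ l) (hα : ∀ k, α k < l) (i j : Fin n) (a b : ℝ)
    (ha : a = 1 ∨ a = -1) (hb : b = 1 ∨ b = -1) :
    Talpha n l α ⁻¹' Hset n i j a b ⊆ Hset n i j a b ∨
      Talpha n l α ⁻¹' Hset n i j a b ⊆ Hset n i j (-a) (-b) := by
  have hl0 : (0 : ℝ) < l := by exact_mod_cast hl
  obtain ⟨k, hk⟩ := exists_int_eq_sign_combination ha hb (α i) (α j) l
  have hcube {x : E n} (hx : Talpha n l α x ∈ Hset n i j a b) : ∀ m, x m ∈ Icc (-1 : ℝ) 1 :=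
    fun m => mem_Icc_of_Talpha_mem_Icc hl hα ((mem_Hset_iff.1 hx).1 m)
  have hshift (x : E n) : l * (a * x i - b * x j) =
      a * Talpha n l α x i - b * Talpha n l α x j + 2 * k := by
    rw [Talpha_apply hl0.ne', Talpha_apply hl0.ne', ← hk]; ring
  rcases le_or_gt 0 k with hk0 | hk0
  · refine .inl fun x hx => mem_Hset_iff.2 ⟨hcube hx, ?_⟩
    have hle := (mem_Hset_iff.1 hx).2
    have : 0 ≤ l * (a * x i - b * x j) := by
      rw [hshift]; linarith [(Int.cast_nonneg hk0 : (0 : ℝ) ≤ k)]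
    linarith [nonneg_of_mul_nonneg_right this hl0]
  · refine .inr fun x hx => mem_Hset_iff.2 ⟨hcube hx, ?_⟩
    have hTi := mul_mem_Icc_of_sign ha ((mem_Hset_iff.1 hx).1 i)
    have hTj := mul_mem_Icc_of_sign hb ((mem_Hset_iff.1 hx).1 j)
    have hk1 : (k : ℝ) ≤ -1 := by exact_mod_cast Int.le_sub_one_of_lt hk0
    have : l * (a * x i - b * x j) ≤ 0 := by
      rw [hshift]; linarith [hTi.2, hTj.1]
    linarith [nonpos_of_mul_nonpos_right this hl0]

end Talpha

lemma exists_Ko_preimage_subset {n : ℕ} {f : E n → E n}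
    (hf : ∀ (i j : Fin n) (a b : ℝ), (a = 1 ∨ a = -1) → (b = 1 ∨ b = -1) →
      f ⁻¹' Hset n i j a b ⊆ Hset n i j a b ∨ f ⁻¹' Hset n i j a b ⊆ Hset n i j (-a) (-b))
    {H : Set (E n)} (hH : H ∈ Ko n) : ∃ H' ∈ Ko n, f ⁻¹' H ⊆ H' := by
  obtain ⟨S, ⟨-, hS⟩, rfl⟩ := hH
  set S' := {B ∈ Hfam n | ∃ A ∈ S, f ⁻¹' A ⊆ B}
  have hpair {i j : Fin n} {a b : ℝ} (ha : a = 1 ∨ a = -1) (hb : b = 1 ∨ b = -1)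
      (h : Hset n i j a b ∈ S ∨ Hset n i j (-a) (-b) ∈ S) :
      Hset n i j a b ∈ S' ∨ Hset n i j (-a) (-b) ∈ S' := by
    have ha' : -a = 1 ∨ -a = -1 := by rcases ha with rfl | rfl <;> norm_num
    have hb' : -b = 1 ∨ -b = -1 := by rcases hb with rfl | rfl <;> norm_num
    have hmem₁ := Hset_mem_Hfam (i := i) (j := j) ha hb
    have hmem₂ := Hset_mem_Hfam (i := i) (j := j) ha' hb'
    rcases h with h | h
    · rcases hf i j a b ha hb with hsub | hsub
      exacts [.inl ⟨hmem₁, _, h, hsub⟩, .inr ⟨hmem₂, _, h, hsub⟩]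
    · rcases hf i j (-a) (-b) ha' hb' with hsub | hsub
      · exact .inr ⟨hmem₂, _, h, hsub⟩
      · rw [neg_neg, neg_neg] at hsub
        exact .inl ⟨hmem₁, _, h, hsub⟩
  refine ⟨⋂₀ S', ⟨S', ⟨fun B hB => hB.1, fun i j _ _ hij => ⟨?_, ?_⟩⟩, rfl⟩, ?_⟩
  · have h := hpair (i := i) (j := j) (.inl rfl) (.inr rfl)
    rw [neg_neg] at h
    exact h (hS i j i.is_lt j.is_lt hij).1
  · exact hpair (.inl rfl) (.inl rfl) (hS i j i.is_lt j.is_lt hij).2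
  · rintro x hx B ⟨-, A, hA, hAB⟩
    exact hAB (hx A hA)

theorem stmt13_general (n : ℕ) (l : ℕ) (hl : 1 ≤ l) (α : Fin n → ℕ)
    (hα : ∀ i, α i < l) :
    (∀ (i j : Fin n) (a b : ℝ), (a = 1 ∨ a = -1) → (b = 1 ∨ b = -1) →
      Talpha n l α ⁻¹' Hset n i j a b ⊆ Hset n i j a b ∨
      Talpha n l α ⁻¹' Hset n i j a b ⊆ Hset n i j (-a) (-b)) ∧
    ∀ H ∈ Ko n, ∃ H' ∈ Ko n, Talpha n l α ⁻¹' H ⊆ H' :=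
  ⟨preimage_Hset_subset_or hl hα,
    fun _ => exists_Ko_preimage_subset (preimage_Hset_subset_or hl hα)⟩

/-- For `T_α(x) = l(x - x_α)`: each `T_α⁻¹(H^n_{ij}(a,b))` is contained in
`H^n_{ij}(a,b)` or in `H^n_{ij}(-a,-b)`; consequently, for every `H ∈ K°_n` there is
`H' ∈ K°_n` with `T_α⁻¹(H) ⊆ H'`. -/
theorem stmt13 (n : ℕ) (hn : 1 ≤ n) (l : ℕ) (hl : 1 ≤ l) (α : Fin n → ℕ)
    (hα : ∀ i, α i < l) :
    (∀ (i j : Fin n) (a b : ℝ), (a = 1 ∨ a = -1) → (b = 1 ∨ b = -1) →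
      Talpha n l α ⁻¹' Hset n i j a b ⊆ Hset n i j a b ∨
      Talpha n l α ⁻¹' Hset n i j a b ⊆ Hset n i j (-a) (-b)) ∧
    ∀ H ∈ Ko n, ∃ H' ∈ Ko n, Talpha n l α ⁻¹' H ⊆ H' :=
  stmt13_general n l hl α hα
end
end

section
/- If H ∈ K_n, x ∈ H, and γ ∈ Sym(I^n) satisfies γ(x) ∈ H, then γ(x) = x. -/
open Set Function

noncomputable section

/-! A symmetry `γ` of the cube, and a conformal map `L` carrying a face `c` onto `I^e × {0}`, both
send the centre to the centre, have scale `1` (compare norms of vertices) and send vertices to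
vertices; hence each acts on coordinates as a signed injection. So the squared coordinates of
`γ x` are a rearrangement of those of `x`. If `x` and `γ x` lie in the same cell `L⁻¹(⋂ ℋ_*)`,
the half-spaces `H_{ij}(±1, ∓1)` and `H_{ij}(±1, ±1)` chosen in `ℋ_*` force `x_i ^ 2 - x_j ^ 2`
and `(γ x)_i ^ 2 - (γ x)_j ^ 2` to have the same sign. By the equality case of the rearrangement
inequality the squared coordinates of `x` and `γ x` agree, and the half-spaces `H_{ii}(±1, ∓1)`
fix the signs. -/

theorem Monovary.eq_of_comp_perm_eq {ι : Type*} [Fintype ι] {f g : ι → ℝ}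
    (hfg : Monovary f g) (σ : Equiv.Perm ι) (hσ : g ∘ σ = f) : f = g := by
  have hfσ : ∀ i, g (σ i) = f i := fun i => congrFun hσ i
  have hrearr : ∑ i, f i * f i ≤ ∑ i, f i * g i := by
    simpa only [hfσ] using hfg.sum_mul_comp_perm_le_sum_mul (σ := σ)
  have hgg : ∑ i, g i * g i = ∑ i, f i * f i := by
    rw [← Equiv.sum_comp σ]; simp only [hfσ]
  have hsum : ∑ i, (f i - g i) ^ 2 = 0 := by
    refine le_antisymm ?_ (Finset.sum_nonneg fun i _ => sq_nonneg _)
    have : ∑ i, (f i - g i) ^ 2 = ∑ i, f i * f i - 2 * ∑ i, f i * g i + ∑ i, g i * g i := by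
      simp only [sub_sq, Finset.sum_add_distrib, Finset.sum_sub_distrib, Finset.mul_sum]; ring_nf
    linarith
  funext i
  have := (Finset.sum_eq_zero_iff_of_nonneg fun i _ => sq_nonneg (f i - g i)).1 hsum i
    (Finset.mem_univ i)
  exact sub_eq_zero.1 (pow_eq_zero_iff two_ne_zero |>.1 this)

theorem eq_of_sq_eq_sq_of_mul_nonneg {a b : ℝ} (h : a ^ 2 = b ^ 2) (hab : 0 ≤ a * b) : a = b := by
  rcases sq_eq_sq_iff_eq_or_eq_neg.1 h with h | rfl
  · exact h
  · nlinarith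

namespace IcubeD

variable {n d : ℕ} {z : E n}

theorem norm_sq_eq_sum (hz : z ∈ IcubeD n d) :
    ‖z‖ ^ 2 = ∑ k ∈ Finset.univ.filter (fun k : Fin n => (k : ℕ) < d), z k ^ 2 := by
  rw [EuclideanSpace.real_norm_sq_eq, Finset.sum_filter]
  refine Finset.sum_congr rfl fun k _ => ?_
  split_ifs with hk
  · rfl
  · rw [hz.2 k (not_lt.1 hk), zero_pow two_ne_zero]

theorem sq_apply_le_one (hz : z ∈ IcubeD n d) {k : Fin n} (hk : (k : ℕ) < d) : z k ^ 2 ≤ 1 := by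
  have := hz.1 k hk
  nlinarith [this.1, this.2]

theorem norm_sq_le (hz : z ∈ IcubeD n d) : ‖z‖ ^ 2 ≤ d := by
  rw [norm_sq_eq_sum hz]
  calc ∑ k ∈ Finset.univ.filter (fun k : Fin n => (k : ℕ) < d), z k ^ 2
      ≤ ∑ k ∈ Finset.univ.filter (fun k : Fin n => (k : ℕ) < d), (1 : ℝ) :=
        Finset.sum_le_sum fun k hk => sq_apply_le_one hz (Finset.mem_filter.1 hk).2
    _ ≤ d := by
        rw [Finset.sum_const, nsmul_one, Fin.card_filter_val_lt]
        exact_mod_cast min_le_right n d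

theorem sq_apply_eq_one_of_norm_sq_eq (hz : z ∈ IcubeD n d) (hnorm : ‖z‖ ^ 2 = d)
    {k : Fin n} (hk : (k : ℕ) < d) : z k ^ 2 = 1 := by
  set s := Finset.univ.filter (fun l : Fin n => (l : ℕ) < d)
  have hnonneg : ∀ l ∈ s, 0 ≤ 1 - z l ^ 2 := fun l hl =>
    sub_nonneg.2 (sq_apply_le_one hz (Finset.mem_filter.1 hl).2)
  have hsum : ∑ l ∈ s, (1 - z l ^ 2) = 0 := by
    refine le_antisymm ?_ (Finset.sum_nonneg hnonneg)
    rw [Finset.sum_sub_distrib, ← norm_sq_eq_sum hz, hnorm, Finset.sum_const, nsmul_one,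
      Fin.card_filter_val_lt, sub_nonpos]
    exact_mod_cast min_le_right n d
  have := (Finset.sum_eq_zero_iff_of_nonneg hnonneg).1 hsum k
    (Finset.mem_filter.2 ⟨Finset.mem_univ k, hk⟩)
  linarith

def corner (n d : ℕ) : E n := WithLp.toLp 2 fun k => if (k : ℕ) < d then 1 else 0

theorem smul_corner_mem {t : ℝ} (ht : t ∈ Icc (-1 : ℝ) 1) : t • corner n d ∈ IcubeD n d := by
  refine ⟨fun k hk => ?_, fun k hk => ?_⟩ <;> simp [corner, hk, not_lt.2, ht]

theorem norm_sq_corner (hd : d ≤ n) : ‖corner n d‖ ^ 2 = d := by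
  rw [EuclideanSpace.real_norm_sq_eq]
  simp [corner, ite_pow, Finset.sum_boole, Fin.card_filter_val_lt, hd]

theorem eq_zero_of_reflect_mem {p : E n} (h : ∀ z ∈ IcubeD n d, (2 : ℝ) • p - z ∈ IcubeD n d) :
    p = 0 := by
  have h₁ := h _ (smul_corner_mem (n := n) (d := d) (t := 1) (by simp))
  have h₂ := h _ (smul_corner_mem (n := n) (d := d) (t := -1) (by simp))
  ext k
  by_cases hk : (k : ℕ) < d
  · have e₁ := (h₁.1 k hk).1
    have e₂ := (h₂.1 k hk).2
    simp only [corner, PiLp.sub_apply, PiLp.smul_apply, hk, if_true, smul_eq_mul] at e₁ e₂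
    rw [PiLp.zero_apply]
    linarith
  · have := h₁.2 k (not_lt.1 hk)
    simpa [corner, hk] using this

end IcubeD

theorem EuclideanSpace.exists_eq_smul_single_of_norm_eq_one {ι : Type*} [Fintype ι]
    [DecidableEq ι] {g : EuclideanSpace ℝ ι} (hg : ‖g‖ = 1)
    (hcoord : ∀ k, g k = 0 ∨ g k ^ 2 = 1) :
    ∃ k, g k ^ 2 = 1 ∧ g = g k • EuclideanSpace.single k (1 : ℝ) := by
  have hsum : ∑ k, g k ^ 2 = 1 := by rw [← EuclideanSpace.real_norm_sq_eq, hg, one_pow]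
  obtain ⟨k, hk⟩ : ∃ k, g k ≠ 0 := by
    by_contra! h
    simp [h] at hsum
  have hk1 : g k ^ 2 = 1 := (hcoord k).resolve_left hk
  refine ⟨k, hk1, ?_⟩
  ext l
  by_cases hlk : l = k
  · subst hlk; simp
  · have hpair : g k ^ 2 + g l ^ 2 ≤ 1 := by
      rw [← hsum, ← Finset.sum_pair (f := fun j => g j ^ 2) (Ne.symm hlk)]
      exact Finset.sum_le_sum_of_subset_of_nonneg (Finset.subset_univ _)
        fun j _ _ => sq_nonneg (g j)
    have : g l = 0 := by nlinarith [sq_nonneg (g l)]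
    simp [this, hlk]

def coordFace {n : ℕ} (F : Finset (Fin n)) (m : E n) : Set (E n) :=
  {x | (∀ i ∈ F, x i ∈ Icc (-1 : ℝ) 1) ∧ ∀ i ∉ F, x i = m i}

namespace coordFace

variable {n : ℕ} {F : Finset (Fin n)} {m x y : E n} {L : E n → E n} {μ : ℝ}
  {U : E n →ₗᵢ[ℝ] E n}

theorem apply_eq_of_notMem (hx : x ∈ coordFace F m) (hy : y ∈ coordFace F m) {i : Fin n}
    (hi : i ∉ F) : x i = y i := by
  rw [hx.2 i hi, hy.2 i hi]

theorem sq_apply_le_one (hm1 : ∀ i ∉ F, m i ^ 2 = 1) (hx : x ∈ coordFace F m) (i : Fin n) :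
    x i ^ 2 ≤ 1 := by
  by_cases hi : i ∈ F
  · nlinarith [(hx.1 i hi).1, (hx.1 i hi).2]
  · rw [hx.2 i hi, hm1 i hi]

theorem subset_Icube (hm1 : ∀ i ∉ F, m i ^ 2 = 1) : coordFace F m ⊆ Icube n :=
  fun _ hx => ⟨fun i _ => abs_le.1 (sq_le_one_iff_abs_le_one _ |>.1 (sq_apply_le_one hm1 hx i)),
    fun i hi => absurd i.isLt (not_lt.2 hi)⟩

/-- The fixed coordinates are `±1`, hence maximal in absolute value on the whole face. -/
theorem monovary_sq (hm1 : ∀ i ∉ F, m i ^ 2 = 1) (hx : x ∈ coordFace F m)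
    (hy : y ∈ coordFace F m)
    (hF : ∀ i ∈ F, ∀ j ∈ F, 0 ≤ (x j ^ 2 - x i ^ 2) * (y j ^ 2 - y i ^ 2)) :
    Monovary (fun i => x i ^ 2) (fun i => y i ^ 2) := by
  refine monovary_iff_forall_mul_nonneg.2 fun i j => ?_
  have hxi := sq_apply_le_one hm1 hx i
  have hxj := sq_apply_le_one hm1 hx j
  have hyi := sq_apply_le_one hm1 hy i
  have hyj := sq_apply_le_one hm1 hy j
  by_cases hj : j ∈ F
  · by_cases hi : i ∈ F
    · exact hF i hi j hj
    · rw [hx.2 i hi, hy.2 i hi, hm1 i hi]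
      exact mul_nonneg_of_nonpos_of_nonpos (by linarith) (by linarith)
  · rw [hx.2 j hj, hy.2 j hj, hm1 j hj]
    exact mul_nonneg (by linarith) (by linarith)

theorem two_smul_sub_mem (hm : ∀ i ∈ F, m i = 0) (hx : x ∈ coordFace F m) :
    (2 : ℝ) • m - x ∈ coordFace F m := by
  refine ⟨fun i hi => ?_, fun i hi => ?_⟩
  · have := hx.1 i hi
    simp only [PiLp.sub_apply, PiLp.smul_apply, hm i hi, smul_zero, zero_sub, mem_Icc] at this ⊢
    constructor <;> linarith [this.1, this.2]
  · simp [hx.2 i hi, two_smul]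

theorem norm_sq_sub_eq_sum (hm : ∀ i ∈ F, m i = 0) (hx : x ∈ coordFace F m) :
    ‖x - m‖ ^ 2 = ∑ i ∈ F, x i ^ 2 := by
  rw [EuclideanSpace.real_norm_sq_eq, ← Finset.sum_subset (Finset.subset_univ F)
    fun i _ hi => by simp [hx.2 i hi]]
  exact Finset.sum_congr rfl fun i hi => by simp [hm i hi]

theorem norm_sq_sub_le (hm : ∀ i ∈ F, m i = 0) (hx : x ∈ coordFace F m) :
    ‖x - m‖ ^ 2 ≤ F.card := by
  rw [norm_sq_sub_eq_sum hm hx]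
  calc ∑ i ∈ F, x i ^ 2 ≤ ∑ _i ∈ F, (1 : ℝ) :=
        Finset.sum_le_sum fun i hi => by nlinarith [(hx.1 i hi).1, (hx.1 i hi).2]
    _ = F.card := by simp

theorem norm_sq_sub_eq_card (hm : ∀ i ∈ F, m i = 0) (hx : x ∈ coordFace F m)
    (hvert : ∀ i ∈ F, x i ^ 2 = 1) : ‖x - m‖ ^ 2 = F.card := by
  rw [norm_sq_sub_eq_sum hm hx, Finset.sum_congr rfl hvert]
  simp

def vertex (F : Finset (Fin n)) (m : E n) : E n :=
  WithLp.toLp 2 fun i => if i ∈ F then 1 else m i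

theorem vertex_mem : vertex F m ∈ coordFace F m :=
  ⟨fun i hi => by simp [vertex, hi], fun i hi => by simp [vertex, hi]⟩

theorem sq_vertex_apply {i : Fin n} (hi : i ∈ F) : vertex F m i ^ 2 = 1 := by
  simp [vertex, hi]

theorem vertex_sub_mem {i : Fin n} (hi : i ∈ F) :
    vertex F m - (2 : ℝ) • EuclideanSpace.single i 1 ∈ coordFace F m := by
  refine ⟨fun j hj => ?_, fun j hj => ?_⟩
  · by_cases hji : j = i
    · subst hji; norm_num [vertex, hj]
    · simp [vertex, hj, hji]
  · have hji : j ≠ i := fun h => hj (h ▸ hi)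
    simp [vertex, hj, hji]

theorem sq_vertex_sub_apply {i j : Fin n} (hi : i ∈ F) (hj : j ∈ F) :
    (vertex F m - (2 : ℝ) • EuclideanSpace.single i 1 : E n) j ^ 2 = 1 := by
  by_cases hji : j = i
  · subst hji; norm_num [vertex, hj]
  · simp [vertex, hj, hji]

theorem map_center_eq_zero (hm : ∀ i ∈ F, m i = 0) (hL : ∀ x y, L x - L y = μ • U (x - y))
    (hLC : L '' coordFace F m = IcubeD n F.card) : L m = 0 := by
  refine IcubeD.eq_zero_of_reflect_mem (d := F.card) fun z hz => ?_
  rw [← hLC] at hz ⊢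
  obtain ⟨x, hx, rfl⟩ := hz
  have hreflect : L ((2 : ℝ) • m - x) = (2 : ℝ) • L m - L x := by
    have h₁ := hL ((2 : ℝ) • m - x) m
    have h₂ := hL x m
    rw [show (2 : ℝ) • m - x - m = -(x - m) by module, map_neg, smul_neg, ← h₂] at h₁
    rw [sub_eq_iff_eq_add.1 h₁]
    module
  exact hreflect ▸ mem_image_of_mem L (two_smul_sub_mem hm hx)

theorem norm_map_eq (hm : ∀ i ∈ F, m i = 0) (hL : ∀ x y, L x - L y = μ • U (x - y))
    (hLC : L '' coordFace F m = IcubeD n F.card) (hμ : 0 < μ) (x : E n) :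
    ‖L x‖ = μ * ‖x - m‖ := by
  rw [← sub_zero (L x), ← map_center_eq_zero hm hL hLC, hL, norm_smul, U.norm_map,
    Real.norm_of_nonneg hμ.le]

theorem scale_eq_one (hm : ∀ i ∈ F, m i = 0) (hL : ∀ x y, L x - L y = μ • U (x - y))
    (hLC : L '' coordFace F m = IcubeD n F.card) (hμ : 0 < μ) (hF : F.Nonempty) : μ = 1 := by
  have hnorm := norm_map_eq hm hL hLC hμ
  have hupper : μ ^ 2 * F.card ≤ F.card := by
    have := IcubeD.norm_sq_le (hLC ▸ mem_image_of_mem L (vertex_mem (F := F) (m := m)))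
    rwa [hnorm, mul_pow, norm_sq_sub_eq_card hm vertex_mem fun i hi => sq_vertex_apply hi] at this
  have hlower : (F.card : ℝ) ≤ μ ^ 2 * F.card := by
    have hcorner := IcubeD.smul_corner_mem (n := n) (d := F.card) (t := 1) (by simp)
    rw [one_smul, ← hLC] at hcorner
    obtain ⟨x, hx, hLx⟩ := hcorner
    have := IcubeD.norm_sq_corner (n := n) (d := F.card) (by simpa using F.card_le_univ)
    rw [← hLx, hnorm, mul_pow] at this
    nlinarith [norm_sq_sub_le hm hx, sq_nonneg μ]
  have hcard : (F.card : ℝ) ≠ 0 := by exact_mod_cast hF.card_pos.ne'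
  have hsq : μ ^ 2 = 1 :=
    mul_right_cancel₀ hcard ((le_antisymm hupper hlower).trans (one_mul _).symm)
  nlinarith

theorem sq_map_apply_eq_one (hm : ∀ i ∈ F, m i = 0) (hL : ∀ x y, L x - L y = μ • U (x - y))
    (hLC : L '' coordFace F m = IcubeD n F.card) (hμ : 0 < μ) {w : E n}
    (hw : w ∈ coordFace F m) (hvert : ∀ i ∈ F, w i ^ 2 = 1) {k : Fin n}
    (hk : (k : ℕ) < F.card) : L w k ^ 2 = 1 := by
  have hμ1 := scale_eq_one hm hL hLC hμ (Finset.card_pos.1 (by omega))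
  refine IcubeD.sq_apply_eq_one_of_norm_sq_eq (hLC ▸ mem_image_of_mem L hw) ?_ hk
  rw [norm_map_eq hm hL hLC hμ, hμ1, one_mul, norm_sq_sub_eq_card hm hw hvert]

theorem exists_map_single_eq (hm : ∀ i ∈ F, m i = 0) (hL : ∀ x y, L x - L y = μ • U (x - y))
    (hLC : L '' coordFace F m = IcubeD n F.card) (hμ : 0 < μ) {i : Fin n} (hi : i ∈ F) :
    ∃ k : Fin n, (k : ℕ) < F.card ∧ ∃ η : ℝ, η ^ 2 = 1 ∧
      U (EuclideanSpace.single i 1) = η • EuclideanSpace.single k 1 := by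
  have hμ1 := scale_eq_one hm hL hLC hμ ⟨i, hi⟩
  set v := vertex F m
  set w := v - (2 : ℝ) • EuclideanSpace.single i 1
  set g := U (EuclideanSpace.single i 1)
  have hg : ∀ k, g k = (L v k - L w k) / 2 := by
    intro k
    have := congrArg (· k) (hL v w)
    simp only [w, sub_sub_cancel, map_smul, hμ1, one_smul, PiLp.sub_apply, PiLp.smul_apply,
      smul_eq_mul] at this
    linarith
  have hzero : ∀ k : Fin n, ¬ (k : ℕ) < F.card → g k = 0 := by
    intro k hk
    rw [hg, (hLC ▸ mem_image_of_mem L vertex_mem : L v ∈ IcubeD n F.card).2 k (not_lt.1 hk),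
      (hLC ▸ mem_image_of_mem L (vertex_sub_mem hi) : L w ∈ IcubeD n F.card).2 k (not_lt.1 hk)]
    simp
  have hcoord : ∀ k, g k = 0 ∨ g k ^ 2 = 1 := by
    intro k
    by_cases hk : (k : ℕ) < F.card
    · have hv := sq_map_apply_eq_one hm hL hLC hμ vertex_mem (fun j hj => sq_vertex_apply hj) hk
      have hw := sq_map_apply_eq_one hm hL hLC hμ (vertex_sub_mem hi)
        (fun j hj => sq_vertex_sub_apply hi hj) hk
      -- half the difference of two numbers in `{-1, 1}` lies in `{-1, 0, 1}`
      have : g k * (g k ^ 2 - 1) = 0 := by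
        rw [hg]
        linear_combination (L v k - 3 * L w k) / 8 * hv + (3 * L v k - L w k) / 8 * hw
      rcases mul_eq_zero.1 this with h | h
      · exact Or.inl h
      · exact Or.inr (sub_eq_zero.1 h)
    · exact Or.inl (hzero k hk)
  have hgnorm : ‖g‖ = 1 := by simp [g]
  obtain ⟨k, hk, hgk⟩ := EuclideanSpace.exists_eq_smul_single_of_norm_eq_one hgnorm hcoord
  refine ⟨k, ?_, g k, hk, hgk⟩
  by_contra hke
  simp [hzero k hke] at hk

theorem exists_map_apply_eq (hm : ∀ i ∈ F, m i = 0) (hL : ∀ x y, L x - L y = μ • U (x - y))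
    (hLC : L '' coordFace F m = IcubeD n F.card) (hμ : 0 < μ) :
    ∃ (ρ : Fin n → Fin n) (η : Fin n → ℝ), (∀ i ∈ F, (ρ i : ℕ) < F.card) ∧ Set.InjOn ρ F ∧
      (∀ i ∈ F, η i ^ 2 = 1) ∧ ∀ x ∈ coordFace F m, ∀ i ∈ F, L x (ρ i) = η i * x i := by
  choose! ρ hρ η hη hU using fun i (hi : i ∈ F) => exists_map_single_eq hm hL hLC hμ hi
  have hinner : ∀ i ∈ F, ∀ j ∈ F, (if ρ i = ρ j then η j * η i else 0) =
      if i = j then 1 else 0 := by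
    intro i hi j hj
    have := U.inner_map_map (EuclideanSpace.single i 1) (EuclideanSpace.single j 1)
    rw [hU i hi, hU j hj] at this
    simpa [inner_smul_left, inner_smul_right, EuclideanSpace.inner_single_left, mul_assoc,
      eq_comm] using this
  refine ⟨ρ, η, hρ, fun i hi j hj hij => ?_, hη, fun x hx i hi => ?_⟩
  · by_contra hne
    have := hinner i hi j hj
    rw [if_pos hij, if_neg hne] at this
    nlinarith [hη i hi, hη j hj]
  · have hLx : L x = U (x - m) := by
      rw [← sub_zero (L x), ← map_center_eq_zero hm hL hLC, hL,
        scale_eq_one hm hL hLC hμ ⟨i, hi⟩, one_smul]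
    -- `e_{ρ i} = η i • U e_i`, so reading coordinate `ρ i` is an inner product that `U` preserves
    have hsingle : EuclideanSpace.single (ρ i) (1 : ℝ) = η i • U (EuclideanSpace.single i 1) := by
      rw [hU i hi, smul_smul, ← sq, hη i hi, one_smul]
    calc L x (ρ i) = inner ℝ (L x) (EuclideanSpace.single (ρ i) (1 : ℝ)) := by
          simp [EuclideanSpace.inner_single_right]
      _ = η i * inner ℝ (U (x - m)) (U (EuclideanSpace.single i 1)) := by
          rw [hsingle, inner_smul_right, hLx]
      _ = η i * x i := by
          rw [U.inner_map_map, EuclideanSpace.inner_single_right]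
          simp [hm i hi]

end coordFace

theorem ConfAffine.injective {n : ℕ} {L : E n → E n} (hL : ConfAffine n L) : Injective L := by
  obtain ⟨c, U, v, hc, hLx⟩ := hL
  intro x y h
  rw [hLx, hLx, add_left_inj] at h
  exact U.injective (smul_right_injective _ hc.ne' h)

theorem ConfAffine.exists_sub_eq_smul {n : ℕ} {L : E n → E n} (hL : ConfAffine n L) :
    ∃ c : ℝ, 0 < c ∧ ∃ U : E n →ₗᵢ[ℝ] E n, ∀ x y, L x - L y = c • U (x - y) := by
  obtain ⟨c, U, v, hc, hLx⟩ := hL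
  exact ⟨c, hc, U.toLinearIsometry, fun x y => by simp [hLx, smul_sub]⟩

theorem IsFaceD.exists_eq_coordFace {n e : ℕ} {c : Set (E n)} (h : IsFaceD n n c e) :
    ∃ (F : Finset (Fin n)) (m : E n), (∀ i ∈ F, m i = 0) ∧ (∀ i ∉ F, m i ^ 2 = 1) ∧
      F.card = e ∧ c = coordFace F m := by
  obtain ⟨J, hJ, -, hcard, rfl⟩ := h
  have hIcc : ∀ t : ℝ, Icc (-1 : ℝ) 1 ≠ {t} := fun t h => by
    obtain ⟨h₁, h₂⟩ := Icc_eq_singleton_iff.1 h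
    linarith
  have : ∀ i, ∃ t : ℝ, (J i = Icc (-1) 1 ∧ t = 0) ∨ (J i = {t} ∧ t ^ 2 = 1) := fun i => by
    rcases hJ i i.isLt with h | h | h
    exacts [⟨0, .inl ⟨h, rfl⟩⟩, ⟨-1, .inr ⟨h, by norm_num⟩⟩, ⟨1, .inr ⟨h, by norm_num⟩⟩]
  choose t ht using this
  refine ⟨Finset.univ.filter fun i => J i = Icc (-1) 1, WithLp.toLp 2 t, fun i hi => ?_,
    fun i hi => ?_, ?_, ?_⟩
  · have hi : J i = Icc (-1) 1 := (Finset.mem_filter.1 hi).2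
    exact ((ht i).resolve_right fun h => hIcc _ (hi ▸ h.1)).2
  · exact ((ht i).resolve_left fun h => hi (by simp [h.1])).2
  · rw [← hcard, ← Set.ncard_coe_finset]
    simp
  · ext x
    refine ⟨fun hx => ⟨fun i hi => (Finset.mem_filter.1 hi).2 ▸ hx i, fun i hi => ?_⟩,
      fun hx i => ?_⟩
    · have := hx i
      rw [((ht i).resolve_left fun h => hi (by simp [h.1])).1] at this
      exact this
    · rcases ht i with h | h
      · exact h.1 ▸ hx.1 i (by simp [h.1])
      · rw [h.1, hx.2 i fun hi => hIcc _ ((Finset.mem_filter.1 hi).2.symm.trans h.1),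
          mem_singleton_iff]

theorem Icube_eq_coordFace (n : ℕ) : Icube n = coordFace Finset.univ 0 := by
  ext x
  simp [Icube, IcubeD, coordFace]

theorem SymI.exists_perm_sq_apply {n : ℕ} {γ : E n → E n} (hγ : SymI n γ) :
    ∃ σ : Equiv.Perm (Fin n), ∀ z ∈ Icube n, ∀ i, γ z (σ i) ^ 2 = z i ^ 2 := by
  obtain ⟨hiso, hsurj, hcube⟩ := hγ
  let A := (IsometryEquiv.mk (Equiv.ofBijective γ ⟨hiso.injective, hsurj⟩)
    hiso).toRealAffineIsometryEquiv
  have hA : ∀ x y, γ x - γ y = (1 : ℝ) • A.linearIsometryEquiv.toLinearIsometry (x - y) :=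
    fun x y => by rw [one_smul]; exact (A.map_vsub x y).symm
  have hLC : γ '' coordFace Finset.univ 0 = IcubeD n (Finset.univ : Finset (Fin n)).card := by
    rw [← Icube_eq_coordFace, Finset.card_univ, Fintype.card_fin]
    exact hcube
  obtain ⟨ρ, η, -, hρ, hη, hγρ⟩ := coordFace.exists_map_apply_eq (fun i _ => rfl) hA hLC one_pos
  have hbij : Bijective ρ := Finite.injective_iff_bijective.1 fun i j h =>
    hρ (Finset.mem_coe.2 (Finset.mem_univ i)) (Finset.mem_coe.2 (Finset.mem_univ j)) h
  refine ⟨Equiv.ofBijective ρ hbij, fun z hz i => ?_⟩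
  rw [Icube_eq_coordFace] at hz
  rw [Equiv.ofBijective_apply, hγρ z hz i (Finset.mem_univ i), mul_pow, hη i (Finset.mem_univ i),
    one_mul]

theorem mul_nonneg_of_mem_sInter {n d : ℕ} {S : Set (Set (E n))} {y y' : E n}
    (hy : y ∈ ⋂₀ S) (hy' : y' ∈ ⋂₀ S) {i j : Fin n} {a b : ℝ}
    (h : HsetD n d i j a b ∈ S ∨ HsetD n d i j (-a) (-b) ∈ S) :
    0 ≤ (a * y i - b * y j) * (a * y' i - b * y' j) := by
  rcases h with h | h
  · exact mul_nonneg (sub_nonneg.2 ((hy _ h).2)) (sub_nonneg.2 ((hy' _ h).2))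
  · have h₁ := (hy _ h).2
    have h₂ := (hy' _ h).2
    exact mul_nonneg_of_nonpos_of_nonpos (by linarith) (by linarith)

namespace IsFundSubsetD

variable {n d : ℕ} {S : Set (Set (E n))} {y y' : E n}

theorem sInter_subset (hS : IsFundSubsetD n d S) (hd : 1 ≤ d) (hdn : d ≤ n) :
    ⋂₀ S ⊆ IcubeD n d := by
  have h0 : ((⟨0, by omega⟩ : Fin n) : ℕ) < d := hd
  rcases (hS.2 _ _ h0 h0 le_rfl).1 with h | h <;>
    exact (sInter_subset_of_mem h).trans fun z hz => hz.1

theorem mul_apply_nonneg (hS : IsFundSubsetD n d S) (hy : y ∈ ⋂₀ S) (hy' : y' ∈ ⋂₀ S)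
    {k : Fin n} (hk : (k : ℕ) < d) : 0 ≤ y k * y' k := by
  have := mul_nonneg_of_mem_sInter (a := 1) (b := -1) hy hy'
    (by rw [neg_neg]; exact (hS.2 k k hk hk le_rfl).1)
  nlinarith

theorem sq_sub_sq_mul_nonneg (hS : IsFundSubsetD n d S) (hy : y ∈ ⋂₀ S) (hy' : y' ∈ ⋂₀ S)
    {k l : Fin n} (hk : (k : ℕ) < d) (hl : (l : ℕ) < d) :
    0 ≤ (y k ^ 2 - y l ^ 2) * (y' k ^ 2 - y' l ^ 2) := by
  wlog hkl : k ≤ l generalizing k l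
  · linarith [this hl hk (le_of_not_ge hkl)]
  obtain ⟨hsum, hdiff⟩ := hS.2 k l hk hl hkl
  have h₁ := mul_nonneg_of_mem_sInter (a := 1) (b := -1) hy hy' (by rw [neg_neg]; exact hsum)
  have h₂ := mul_nonneg_of_mem_sInter (a := 1) (b := 1) hy hy' hdiff
  linarith [mul_nonneg h₁ h₂]

end IsFundSubsetD

theorem SymI.eq_of_map_mem_sInter {n : ℕ} {F : Finset (Fin n)} {m : E n}
    (hm : ∀ i ∈ F, m i = 0) (hm1 : ∀ i ∉ F, m i ^ 2 = 1) (he : 1 ≤ F.card)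
    {L : E n → E n} (hL : ConfAffine n L) (hLc : L '' coordFace F m = IcubeD n F.card)
    {S : Set (Set (E n))} (hS : IsFundSubsetD n F.card S) {γ : E n → E n} (hγ : SymI n γ)
    {x : E n} (hx : L x ∈ ⋂₀ S) (hγx : L (γ x) ∈ ⋂₀ S) : γ x = x := by
  have hmem : ∀ {z}, L z ∈ ⋂₀ S → z ∈ coordFace F m := fun {z} hz => by
    rw [← preimage_image_eq (coordFace F m) hL.injective, hLc]
    exact hS.sInter_subset he (by simpa using F.card_le_univ) hz
  have hxc := hmem hx
  have hyc := hmem hγx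
  obtain ⟨μ, hμ, U, hLU⟩ := hL.exists_sub_eq_smul
  obtain ⟨ρ, η, hρ, -, hη, hLρ⟩ := coordFace.exists_map_apply_eq hm hLU hLc hμ
  have hsqρ : ∀ z ∈ coordFace F m, ∀ i ∈ F, L z (ρ i) ^ 2 = z i ^ 2 := fun z hz i hi => by
    rw [hLρ z hz i hi, mul_pow, hη i hi, one_mul]
  have hmono : Monovary (fun i => x i ^ 2) (fun i => γ x i ^ 2) :=
    coordFace.monovary_sq hm1 hxc hyc fun i hi j hj => by
      simpa only [hsqρ x hxc, hsqρ (γ x) hyc, hi, hj] using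
        hS.sq_sub_sq_mul_nonneg hx hγx (hρ j hj) (hρ i hi)
  obtain ⟨σ, hσ⟩ := hγ.exists_perm_sq_apply
  have hsq := hmono.eq_of_comp_perm_eq σ (funext fun i => hσ x (coordFace.subset_Icube hm1 hxc) i)
  ext i
  by_cases hi : i ∈ F
  · refine eq_of_sq_eq_sq_of_mul_nonneg (congrFun hsq i).symm ?_
    have := hS.mul_apply_nonneg hγx hx (hρ i hi)
    rwa [hLρ _ hyc i hi, hLρ _ hxc i hi, mul_mul_mul_comm, ← sq, hη i hi, one_mul] at this
  · exact coordFace.apply_eq_of_notMem hyc hxc hi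

theorem stmt15_general (n : ℕ) (H : Set (E n)) (hH : H ∈ Kcal n)
    (x : E n) (hx : x ∈ H) (γ : E n → E n) (hγ : SymI n γ) (hγx : γ x ∈ H) :
    γ x = x := by
  obtain ⟨c, e, hc, hK⟩ := hH
  obtain ⟨F, m, hm, hm1, rfl, rfl⟩ := hc.exists_eq_coordFace
  rcases hK with ⟨he, rfl⟩ | ⟨he, L, hL, hLc, _, ⟨S, hS, rfl⟩, rfl⟩
  · ext i
    exact coordFace.apply_eq_of_notMem hγx hx (by simp [Finset.card_eq_zero.1 he])
  · exact hγ.eq_of_map_mem_sInter hm hm1 he hL hLc hS hx hγx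

/-- If `H ∈ K_n`, `x ∈ H`, and `γ ∈ Sym(I^n)` satisfies `γ(x) ∈ H`, then `γ(x) = x`. -/
theorem stmt15 (n : ℕ) (hn : 1 ≤ n) (H : Set (E n)) (hH : H ∈ Kcal n)
    (x : E n) (hx : x ∈ H) (γ : E n → E n) (hγ : SymI n γ) (hγx : γ x ∈ H) :
    γ x = x :=
  stmt15_general n H hH x hx γ hγ hγx
end
end

section
/- Let R be an n-dimensional orthotope in ℝ^n and let γ be a surjective isometry of ℝ^n with γ(R) = R. If H ∈ K_n(R) and x ∈ H satisfy γ(x) ∈ H, then γ(x) = x. -/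
/-!
Conjugating `γ` by the isometry and the cubic stretching of `R` gives an affine self-map of the
cube `[-1, 1]^n`, and such a map is a signed permutation of the coordinates: it fixes the centre,
and a linear map preserving the sup-norm unit ball has rows of absolute sum at most one and
columns of sup-norm at least one. A cell of `K_n` lies in a face of the cube, whose free
coordinates are again a signed permutation of those of a cell of `K°_e`; so two points `y`, `z`
of one cell lie weakly on the same side of every hyperplane `x i = ± x j`. Then the squares
`y i ^ 2` and `z i ^ 2` are comonotone, and if `z` is a signed permutation of `y` they are also a
permutation of each other, so they agree by the rearrangement inequality; the signs agree
because both points lie on the same side of each hyperplane `x i = 0`.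
-/

open Set Function

noncomputable section

open Metric

section Cube
variable {ι κ : Type*} [Fintype ι] [Fintype κ]

lemma mem_closedBall_zero_one_iff {x : ι → ℝ} :
    x ∈ closedBall (0 : ι → ℝ) 1 ↔ ∀ i, |x i| ≤ 1 := by
  simp only [mem_closedBall_zero_iff, pi_norm_le_iff_of_nonneg zero_le_one, Real.norm_eq_abs]

theorem AffineMap.map_zero_eq_zero_of_image_closedBall {V W : Type*} [NormedAddCommGroup V]
    [NormedSpace ℝ V] [NormedAddCommGroup W] [NormedSpace ℝ W] (f : V →ᵃ[ℝ] W) {r : ℝ}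
    (hr : 0 ≤ r) (hf : f '' closedBall 0 r = closedBall 0 r) : f 0 = 0 := by
  by_contra ht
  have ht' : 0 < ‖f 0‖ := norm_pos_iff.2 ht
  set s := r / ‖f 0‖
  have hs : 0 ≤ s := by positivity
  have hv : -s • f 0 ∈ f '' closedBall 0 r := by
    rw [hf, mem_closedBall_zero_iff, norm_smul, norm_neg, Real.norm_of_nonneg hs,
      div_mul_cancel₀ _ ht'.ne']
  obtain ⟨x, hx, hfx⟩ := hv
  have hneg : f (-x) ∈ closedBall (0 : W) r :=
    hf ▸ mem_image_of_mem f (by rwa [mem_closedBall_zero_iff, norm_neg, ← mem_closedBall_zero_iff])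
  -- `f (-x)` is the reflection of `f x = -s • f 0` through `f 0`, hence outside the ball
  have hfneg : f (-x) = (2 + s) • f 0 := by
    have hx' := congrFun f.decomp x
    have hnx := congrFun f.decomp (-x)
    simp only [Pi.add_apply, map_neg] at hx' hnx
    rw [hnx, ← sub_eq_of_eq_add hx', hfx]
    module
  rw [hfneg, mem_closedBall_zero_iff, norm_smul, Real.norm_of_nonneg (by positivity), add_mul,
    div_mul_cancel₀ _ ht'.ne'] at hneg
  linarith

theorem LinearMap.surjective_of_closedBall_subset_range {V W : Type*} [NormedAddCommGroup V]
    [NormedSpace ℝ V] [NormedAddCommGroup W] [NormedSpace ℝ W] (A : V →ₗ[ℝ] W) {r : ℝ}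
    (hr : 0 < r) (hA : closedBall 0 r ⊆ Set.range A) : Surjective A := by
  intro w
  rcases eq_or_ne w 0 with rfl | hw
  · exact ⟨0, map_zero A⟩
  have hw' : 0 < ‖w‖ := norm_pos_iff.2 hw
  obtain ⟨v, hv⟩ := hA (show (r / ‖w‖) • w ∈ closedBall 0 r by
    rw [mem_closedBall_zero_iff, norm_smul, Real.norm_of_nonneg (by positivity),
      div_mul_cancel₀ _ hw'.ne'])
  refine ⟨(‖w‖ / r) • v, ?_⟩
  rw [map_smul, hv, smul_smul, div_mul_div_cancel₀ hr.ne', div_self hw'.ne', one_smul]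

variable [DecidableEq ι]

lemma LinearMap.sum_abs_toMatrix'_le_one {A : (ι → ℝ) →ₗ[ℝ] (κ → ℝ)}
    (hA : A '' closedBall 0 1 ⊆ closedBall 0 1) (k : κ) :
    ∑ i, |LinearMap.toMatrix' A k i| ≤ 1 := by
  have hx : (fun i => (SignType.sign (LinearMap.toMatrix' A k i) : ℝ)) ∈
      closedBall (0 : ι → ℝ) 1 := by
    refine mem_closedBall_zero_one_iff.2 fun i => ?_
    rcases SignType.sign (LinearMap.toMatrix' A k i) with _ | _ | _ <;> simp
  have := mem_closedBall_zero_one_iff.1 (hA (mem_image_of_mem A hx)) k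
  rw [← LinearMap.toMatrix'_mulVec, Matrix.mulVec, dotProduct] at this
  simpa only [self_mul_sign] using (le_abs_self _).trans this

lemma LinearMap.exists_one_le_abs_toMatrix' {A : (ι → ℝ) →ₗ[ℝ] (κ → ℝ)} (hinj : Injective A)
    (hA : closedBall 0 1 ⊆ A '' closedBall 0 1) (j : ι) :
    ∃ k, 1 ≤ |LinearMap.toMatrix' A k j| := by
  simp only [LinearMap.toMatrix'_apply]
  by_contra! h
  set v := A (Pi.single j 1)
  have hv : 0 < ‖v‖ := norm_pos_iff.2 fun h0 =>
    Pi.single_ne_zero_iff.2 one_ne_zero (hinj (h0.trans (map_zero A).symm))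
  have hv1 : ‖v‖ < 1 := (pi_norm_lt_iff zero_lt_one).2 h
  obtain ⟨x, hx, hAx⟩ := hA (show ‖v‖⁻¹ • v ∈ closedBall 0 1 by
    rw [mem_closedBall_zero_iff, norm_smul, norm_inv, norm_norm, inv_mul_cancel₀ hv.ne'])
  rw [← map_smul] at hAx
  have := mem_closedBall_zero_one_iff.1 hx j
  rw [hinj hAx, Pi.smul_apply, Pi.single_eq_same, smul_eq_mul, mul_one,
    abs_of_pos (inv_pos.2 hv)] at this
  exact absurd (one_lt_inv₀ hv |>.2 hv1) (not_lt.2 this)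


theorem LinearMap.exists_signed_equiv_of_image_closedBall (A : (ι → ℝ) →ₗ[ℝ] (κ → ℝ))
    (hcard : Fintype.card ι = Fintype.card κ) (hA : A '' closedBall 0 1 = closedBall 0 1) :
    ∃ (τ : κ ≃ ι) (δ : κ → ℝ), (∀ k, |δ k| = 1) ∧ ∀ x k, A x k = δ k * x (τ k) := by
  have hinj : Injective A :=
    (LinearMap.injective_iff_surjective_of_finrank_eq_finrank (by simp [hcard])).2
      (A.surjective_of_closedBall_subset_range zero_lt_one
        (hA.symm.subset.trans (image_subset_range _ _)))
  choose σ hσ using A.exists_one_le_abs_toMatrix' hinj hA.symm.subset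
  have hrow : ∀ j, |LinearMap.toMatrix' A (σ j) j| = 1 ∧
      ∀ i ≠ j, LinearMap.toMatrix' A (σ j) i = 0 := by
    intro j
    have hsum := A.sum_abs_toMatrix'_le_one hA.subset (σ j)
    rw [← Finset.add_sum_erase _ _ (Finset.mem_univ j)] at hsum
    have hrest : ∑ i ∈ Finset.univ.erase j, |LinearMap.toMatrix' A (σ j) i| = 0 :=
      le_antisymm (by linarith [hσ j]) (Finset.sum_nonneg fun i _ => abs_nonneg _)
    refine ⟨le_antisymm (by linarith [hrest]) (hσ j), fun i hi => abs_eq_zero.1 ?_⟩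
    exact (Finset.sum_eq_zero_iff_of_nonneg (fun i _ => abs_nonneg _)).1 hrest i
      (Finset.mem_erase.2 ⟨hi, Finset.mem_univ _⟩)
  have hσinj : Injective σ := fun i j hij => by
    by_contra hne
    have h0 := (hrow j).2 i hne
    rw [← hij] at h0
    simpa [h0] using (hrow i).1
  let e := Equiv.ofBijective σ ((Fintype.bijective_iff_injective_and_card σ).2 ⟨hσinj, hcard⟩)
  have he : ∀ k, σ (e.symm k) = k := e.apply_symm_apply
  refine ⟨e.symm, fun k => LinearMap.toMatrix' A k (e.symm k), fun k => ?_, fun x k => ?_⟩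
  · simpa only [he] using (hrow (e.symm k)).1
  · rw [← LinearMap.toMatrix'_mulVec, Matrix.mulVec, dotProduct,
      Finset.sum_eq_single (e.symm k) (fun i _ hi => by rw [← he k, (hrow _).2 i hi, zero_mul])
        (fun h => absurd (Finset.mem_univ _) h), mul_comm]

theorem AffineMap.exists_signed_equiv_of_image_closedBall (f : (ι → ℝ) →ᵃ[ℝ] (κ → ℝ))
    (hcard : Fintype.card ι = Fintype.card κ) (hf : f '' closedBall 0 1 = closedBall 0 1) :
    ∃ (τ : κ ≃ ι) (δ : κ → ℝ), (∀ k, |δ k| = 1) ∧ ∀ x k, f x k = δ k * x (τ k) := by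
  have hf0 := f.map_zero_eq_zero_of_image_closedBall zero_le_one hf
  have hlin : ⇑f.linear = f := by rw [f.decomp', hf0]; exact sub_zero _
  exact f.linear.exists_signed_equiv_of_image_closedBall hcard (hlin ▸ hf) |>.imp
    fun τ => Exists.imp fun δ => And.imp_right fun h x k => hlin ▸ h x k

end Cube

/-- `y` and `z` lie weakly on the same side of every hyperplane `x i = x j` and `x i = -x j`. -/
def Concordant {ι : Type*} (y z : ι → ℝ) : Prop :=
  ∀ i j, 0 ≤ (y i + y j) * (z i + z j) ∧ 0 ≤ (y i - y j) * (z i - z j)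

lemma Monovary.eq_of_eq_comp_perm {ι : Type*} [Fintype ι] {U V : ι → ℝ} (h : Monovary U V)
    (π : Equiv.Perm ι) (hV : ∀ i, V i = U (π i)) : V = U := by
  have hrearr : ∑ i, U i * U i ≤ ∑ i, U i * V i := by
    simpa [hV] using h.sum_smul_comp_perm_le_sum_smul (σ := π.symm)
  have hsumV : ∑ i, V i * V i = ∑ i, U i * U i := by
    simp only [hV]
    exact Equiv.sum_comp π fun i => U i * U i
  have hsq : ∑ i, (U i - V i) ^ 2 = 0 := by
    refine le_antisymm ?_ (Finset.sum_nonneg fun i _ => sq_nonneg _)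
    have : ∑ i, (U i - V i) ^ 2 = ∑ i, U i * U i + ∑ i, V i * V i - 2 * ∑ i, U i * V i := by
      simp only [Finset.mul_sum, ← Finset.sum_add_distrib, ← Finset.sum_sub_distrib]
      exact Finset.sum_congr rfl fun i _ => by ring
    linarith
  funext i
  have := (Finset.sum_eq_zero_iff_of_nonneg fun i _ => sq_nonneg (U i - V i)).1 hsq i
    (Finset.mem_univ i)
  exact (sub_eq_zero.1 (pow_eq_zero_iff two_ne_zero |>.1 this)).symm

namespace Concordant
variable {ι κ : Type*} {y z : ι → ℝ}

lemma pair_symm {a b c d : ℝ} (h : 0 ≤ (a + b) * (c + d) ∧ 0 ≤ (a - b) * (c - d)) :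
    0 ≤ (b + a) * (d + c) ∧ 0 ≤ (b - a) * (d - c) := by
  rwa [add_comm b, add_comm d, ← neg_sub a, ← neg_sub c, neg_mul_neg]

lemma of_le [LinearOrder ι]
    (h : ∀ i j, i ≤ j → 0 ≤ (y i + y j) * (z i + z j) ∧ 0 ≤ (y i - y j) * (z i - z j)) :
    Concordant y z := fun i j =>
  (le_total i j).elim (h i j) fun hji => pair_symm (h j i hji)

lemma of_signed_equiv (τ : κ ≃ ι) {δ : κ → ℝ} (hδ : ∀ k, |δ k| = 1)
    (h : Concordant (fun k => δ k * y (τ k)) (fun k => δ k * z (τ k))) : Concordant y z := by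
  intro i j
  have hij := h (τ.symm i) (τ.symm j)
  simp only [Equiv.apply_symm_apply] at hij
  rcases (abs_eq zero_le_one).1 (hδ (τ.symm i)) with hi | hi <;>
    rcases (abs_eq zero_le_one).1 (hδ (τ.symm j)) with hj | hj <;>
    rw [hi, hj] at hij <;> constructor <;> linarith [hij.1, hij.2]

lemma eq_of_signed_perm [Fintype ι] (h : Concordant y z) (π : Equiv.Perm ι) {δ : ι → ℝ}
    (hδ : ∀ i, |δ i| = 1) (hz : ∀ i, z i = δ i * y (π i)) : z = y := by
  have hsq : (fun i => z i ^ 2) = fun i => y i ^ 2 := by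
    refine Monovary.eq_of_eq_comp_perm (fun i j hij => ?_) π fun i => ?_
    · obtain ⟨h₁, h₂⟩ := h i j
      by_contra! hy
      have : (y i ^ 2 - y j ^ 2) * (z i ^ 2 - z j ^ 2) =
          ((y i + y j) * (z i + z j)) * ((y i - y j) * (z i - z j)) := by ring
      nlinarith [mul_nonneg h₁ h₂, mul_pos (sub_pos.2 hy) (sub_pos.2 hij)]
    · simp only [hz, mul_pow, ← sq_abs (δ i), hδ, one_pow, one_mul]
  funext i
  have hsign := (h i i).1
  rcases sq_eq_sq_iff_eq_or_eq_neg.1 (congrFun hsq i) with h' | h'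
  · exact h'
  · rw [h'] at hsign
    nlinarith
end Concordant

section Coords
variable {ι : Type*}

def restrictCoords (F : Set ι) : EuclideanSpace ℝ ι →ₗ[ℝ] (F → ℝ) :=
  (LinearMap.funLeft ℝ ℝ Subtype.val).comp (WithLp.linearEquiv 2 ℝ (ι → ℝ)).toLinearMap

variable (F : Set ι) [DecidablePred (· ∈ F)] (u₀ : EuclideanSpace ℝ ι)

def fillCoords : (F → ℝ) →ᵃ[ℝ] EuclideanSpace ℝ ι :=
  (WithLp.linearEquiv 2 ℝ (ι → ℝ)).symm.toLinearMap.toAffineMap.comp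
    (AffineMap.pi fun i => if h : i ∈ F then (LinearMap.proj (⟨i, h⟩ : F)).toAffineMap
      else AffineMap.const ℝ (F → ℝ) (u₀ i))

variable {F u₀}

lemma fillCoords_apply (w : F → ℝ) (i : ι) :
    fillCoords F u₀ w i = if h : i ∈ F then w ⟨i, h⟩ else u₀ i := by
  by_cases h : i ∈ F <;> simp [fillCoords, h]

lemma restrictCoords_fillCoords (w : F → ℝ) : restrictCoords F (fillCoords F u₀ w) = w := by
  funext i
  simp [restrictCoords, fillCoords_apply, i.2]

lemma fillCoords_restrictCoords {u : EuclideanSpace ℝ ι} (hu : ∀ i ∉ F, u i = u₀ i) :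
    fillCoords F u₀ (restrictCoords F u) = u := by
  ext i
  by_cases h : i ∈ F
  · simp [restrictCoords, fillCoords_apply, h]
  · simp [fillCoords_apply, h, hu i h]

lemma image_fillCoords_closedBall [Fintype ι] :
    fillCoords F u₀ '' closedBall 0 1 =
      {x | (∀ i ∈ F, x i ∈ Icc (-1 : ℝ) 1) ∧ ∀ i ∉ F, x i = u₀ i} := by
  ext x
  constructor
  · rintro ⟨w, hw, rfl⟩
    refine ⟨fun i hi => ?_, fun i hi => ?_⟩
    · rw [fillCoords_apply, dif_pos hi]
      exact abs_le.1 (mem_closedBall_zero_one_iff.1 hw _)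
    · rw [fillCoords_apply, dif_neg hi]
  · rintro ⟨hF, hFc⟩
    exact ⟨restrictCoords F x, mem_closedBall_zero_one_iff.2 fun i => abs_le.2 (hF i i.2),
      fillCoords_restrictCoords hFc⟩

end Coords

lemma IcubeD_eq_image_fillCoords (n e : ℕ) :
    IcubeD n e = fillCoords {k : Fin n | (k : ℕ) < e} 0 '' closedBall 0 1 := by
  ext x
  simp [image_fillCoords_closedBall, IcubeD]

lemma face_eq_image_fillCoords {ι : Type*} [Fintype ι] {J : ι → Set ℝ}
    [DecidablePred (· ∈ {i | J i = Icc (-1 : ℝ) 1})]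
    (hJ : ∀ i, J i = Icc (-1) 1 ∨ J i = {-1} ∨ J i = {1}) {u₀ : EuclideanSpace ℝ ι}
    (hu₀ : ∀ i, u₀ i ∈ J i) :
    {x : EuclideanSpace ℝ ι | ∀ i, x i ∈ J i} =
      fillCoords {i | J i = Icc (-1 : ℝ) 1} u₀ '' closedBall 0 1 := by
  rw [image_fillCoords_closedBall]
  ext x
  refine ⟨fun hx => ⟨fun i hi => hi ▸ hx i, fun i hi => ?_⟩, fun ⟨hF, hFc⟩ i => ?_⟩
  · obtain ⟨s, hs⟩ : ∃ s, J i = {s} := by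
      rcases hJ i with h | h | h
      exacts [absurd h hi, ⟨_, h⟩, ⟨_, h⟩]
    have hxi := hx i
    have hui := hu₀ i
    rw [hs, mem_singleton_iff] at hxi hui
    rw [hxi, hui]
  · by_cases hi : J i = Icc (-1) 1
    · exact hi ▸ hF i hi
    · exact hFc i hi ▸ hu₀ i

lemma ConfAffine.exists_affineEquiv {n : ℕ} {M : E n → E n} (hM : ConfAffine n M) :
    ∃ M' : E n ≃ᵃ[ℝ] E n, ⇑M' = M := by
  obtain ⟨c, U, v, hc, hMx⟩ := hM
  refine ⟨(U.toLinearEquiv.trans (LinearEquiv.smulOfNeZero ℝ (E n) c hc.ne')).toAffineEquiv.trans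
    (AffineEquiv.constVAdd ℝ (E n) v), funext fun x => ?_⟩
  simp [hMx, add_comm]

lemma exists_signed_equiv_of_image_face {n e : ℕ} {J : Fin n → Set ℝ}
    (hJ : ∀ i, J i = Icc (-1) 1 ∨ J i = {-1} ∨ J i = {1})
    (hcard : {i | J i = Icc (-1 : ℝ) 1}.ncard = e) (M : E n →ᵃ[ℝ] E n)
    (hM : M '' {x | ∀ i, x i ∈ J i} = IcubeD n e) :
    ∃ (τ : {k : Fin n | (k : ℕ) < e} ≃ {i | J i = Icc (-1 : ℝ) 1})
      (δ : {k : Fin n | (k : ℕ) < e} → ℝ), (∀ k, |δ k| = 1) ∧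
      ∀ u : E n, (∀ i, u i ∈ J i) → ∀ k : {k : Fin n | (k : ℕ) < e}, M u k = δ k * u (τ k) := by
  classical
  obtain ⟨u₀, hu₀, -⟩ : (0 : E n) ∈ M '' {x | ∀ i, x i ∈ J i} := by
    rw [hM, IcubeD_eq_image_fillCoords]
    exact ⟨0, mem_closedBall_self zero_le_one, by ext i; simp [fillCoords_apply]⟩
  have hface := face_eq_image_fillCoords hJ hu₀
  set F := {i | J i = Icc (-1 : ℝ) 1}
  set κ := {k : Fin n | (k : ℕ) < e}
  set f := (restrictCoords κ).toAffineMap.comp (M.comp (fillCoords F u₀))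
  have hf : f '' closedBall 0 1 = closedBall 0 1 := by
    have hid : ⇑(restrictCoords κ) ∘ ⇑(fillCoords κ (0 : E n)) = id :=
      funext restrictCoords_fillCoords
    rw [AffineMap.coe_comp, AffineMap.coe_comp, image_comp, image_comp, ← hface, hM,
      IcubeD_eq_image_fillCoords, LinearMap.coe_toAffineMap, ← image_comp, hid, image_id]
  have hen : e ≤ n := by simpa [hcard] using Set.ncard_le_card F
  have hcardFκ : Fintype.card F = Fintype.card κ := by
    rw [Fintype.card_eq_nat_card, Nat.card_coe_set_eq, hcard, Fintype.card_subtype]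
    simp only [κ, Set.mem_ofPred_eq, Fin.card_filter_val_lt, min_eq_right hen]
  obtain ⟨τ, δ, hδ, hfτ⟩ := f.exists_signed_equiv_of_image_closedBall hcardFκ hf
  refine ⟨τ, δ, hδ, fun u hu k => ?_⟩
  obtain ⟨w, -, rfl⟩ : u ∈ fillCoords F u₀ '' closedBall 0 1 := hface ▸ hu
  simpa [f, restrictCoords, fillCoords_apply, (τ k).2] using hfτ w k

lemma IsFundSubsetD.sInter_subset_IcubeD {n d : ℕ} {S : Set (Set (E n))} (hS : IsFundSubsetD n d S)
    {i : Fin n} (hi : (i : ℕ) < d) : ⋂₀ S ⊆ IcubeD n d := by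
  have hmem : ∀ T ∈ S, T ⊆ IcubeD n d := fun T hT => by
    obtain ⟨i, j, -, -, a, b, -, -, rfl⟩ := hS.1 hT
    exact sep_subset _ _
  rcases (hS.2 i i hi hi le_rfl).1 with hT | hT
  exacts [(sInter_subset_of_mem hT).trans (hmem _ hT), (sInter_subset_of_mem hT).trans (hmem _ hT)]

lemma Concordant.of_mem_sInter {n d : ℕ} {S : Set (Set (E n))} (hS : IsFundSubsetD n d S)
    {p q : E n} (hp : p ∈ ⋂₀ S) (hq : q ∈ ⋂₀ S) :
    Concordant (fun k : {k : Fin n | (k : ℕ) < d} => p k) (fun k => q k) := by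
  refine Concordant.of_le fun ⟨i, hi⟩ ⟨j, hj⟩ hij => ?_
  have side : ∀ a b, HsetD n d i j a b ∈ S → b * p j ≤ a * p i ∧ b * q j ≤ a * q i :=
    fun a b hT => ⟨(hp _ hT).2, (hq _ hT).2⟩
  obtain ⟨hsum, hdiff⟩ := hS.2 i j hi hj hij
  constructor
  · rcases hsum with hT | hT <;> obtain ⟨h₁, h₂⟩ := side _ _ hT
    · exact mul_nonneg (by linarith) (by linarith)
    · exact mul_nonneg_of_nonpos_of_nonpos (by linarith) (by linarith)
  · rcases hdiff with hT | hT <;> obtain ⟨h₁, h₂⟩ := side _ _ hT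
    · exact mul_nonneg (by linarith) (by linarith)
    · exact mul_nonneg_of_nonpos_of_nonpos (by linarith) (by linarith)

lemma Concordant.of_mem_face {ι : Type*} {J : ι → Set ℝ}
    (hJ : ∀ i, J i = Icc (-1) 1 ∨ J i = {-1} ∨ J i = {1}) {y z : ι → ℝ}
    (hy : ∀ i, y i ∈ J i) (hz : ∀ i, z i ∈ J i)
    (h : Concordant (fun i : {i | J i = Icc (-1 : ℝ) 1} => y i) (fun i => z i)) :
    Concordant y z := by
  have hIcc : ∀ i, J i ⊆ Icc (-1) 1 := fun i => by
    rcases hJ i with h | h | h <;> simp [h]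
  have hfixed : ∀ i, J i ≠ Icc (-1) 1 → ∀ j,
      0 ≤ (y i + y j) * (z i + z j) ∧ 0 ≤ (y i - y j) * (z i - z j) := by
    intro i hi j
    obtain ⟨hy₁, hy₂⟩ := hIcc j (hy j)
    obtain ⟨hz₁, hz₂⟩ := hIcc j (hz j)
    rcases hJ i with hs | hs | hs
    · exact absurd hs hi
    all_goals
      have hyi := hs ▸ hy i
      have hzi := hs ▸ hz i
      rw [mem_singleton_iff] at hyi hzi
      rw [hyi, hzi]
    · exact ⟨mul_nonneg_of_nonpos_of_nonpos (by linarith) (by linarith),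
        mul_nonneg_of_nonpos_of_nonpos (by linarith) (by linarith)⟩
    · exact ⟨mul_nonneg (by linarith) (by linarith), mul_nonneg (by linarith) (by linarith)⟩
  intro i j
  by_cases hi : J i = Icc (-1) 1
  · by_cases hj : J j = Icc (-1) 1
    · exact h ⟨i, hi⟩ ⟨j, hj⟩
    · exact pair_symm (hfixed j hj i)
  · exact hfixed i hi j

lemma concordant_of_mem_Kcal {n : ℕ} {H : Set (E n)} (hH : H ∈ Kcal n) {y z : E n}
    (hy : y ∈ H) (hz : z ∈ H) : Concordant y.ofLp z.ofLp := by
  obtain ⟨c, e, ⟨J, hJ, -, hcard, rfl⟩, hK⟩ := hH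
  replace hJ : ∀ i, J i = Icc (-1) 1 ∨ J i = {-1} ∨ J i = {1} := fun i => hJ i i.isLt
  rcases hK with ⟨he, rfl⟩ | ⟨he, M, hM, hMc, -, ⟨S, hS, rfl⟩, rfl⟩
  · have hF : {i | J i = Icc (-1 : ℝ) 1} = ∅ := (Set.ncard_eq_zero).1 (hcard.trans he)
    exact Concordant.of_mem_face hJ hy hz fun i => absurd (hF ▸ i.2) (notMem_empty i.1)
  obtain ⟨M, rfl⟩ := hM.exists_affineEquiv
  have hen : e ≤ n := by simpa [hcard] using Set.ncard_le_card {i | J i = Icc (-1 : ℝ) 1}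
  have hface : ∀ u, M u ∈ ⋂₀ S → ∀ i, u i ∈ J i := fun u hu => by
    obtain ⟨v, hv, hvu⟩ := hMc.symm ▸ hS.sInter_subset_IcubeD (i := ⟨0, by omega⟩) he hu
    exact M.injective hvu ▸ hv
  obtain ⟨τ, δ, hδ, hMτ⟩ := exists_signed_equiv_of_image_face hJ hcard M.toAffineMap hMc
  refine Concordant.of_mem_face hJ (hface y hy) (hface z hz) (Concordant.of_signed_equiv τ hδ ?_)
  convert Concordant.of_mem_sInter hS hy hz using 1 <;> funext k
  exacts [(hMτ y (hface y hy) k).symm, (hMτ z (hface z hz) k).symm]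

lemma image_stretch_stdOrtho {n : ℕ} {a : Fin n → ℝ} (ha : ∀ i, 0 < a i) :
    (fun u => (stretch n a u).ofLp) '' StdOrtho n a = closedBall 0 1 := by
  ext v
  simp only [mem_image, mem_closedBall_zero_one_iff, stretch, StdOrtho, mem_ofPred_eq]
  constructor
  · rintro ⟨u, hu, rfl⟩ i
    rw [abs_div, abs_of_pos (ha i), div_le_one (ha i)]
    exact abs_le.2 (hu i)
  · intro hv
    refine ⟨WithLp.toLp 2 fun i => v i * a i, fun i => ?_, funext fun i => ?_⟩
    · have := abs_le.1 (hv i)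
      constructor <;> nlinarith [ha i]
    · exact mul_div_cancel_right₀ _ (ha i).ne'

lemma exists_affineEquiv_stretch_comp {n : ℕ} {L : E n → E n} (hL : Isometry L)
    (hLsurj : Surjective L) {a : Fin n → ℝ} (ha : ∀ i, a i ≠ 0) :
    ∃ Φ : E n ≃ᵃ[ℝ] (Fin n → ℝ), ∀ u, Φ u = (stretch n a (L u)).ofLp := by
  let L' : E n ≃ᵢ E n := ⟨Equiv.ofBijective L ⟨hL.injective, hLsurj⟩, hL⟩
  refine ⟨L'.toRealAffineIsometryEquiv.toAffineEquiv.trans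
    ((WithLp.linearEquiv 2 ℝ (Fin n → ℝ)).trans
      (LinearEquiv.piCongrRight fun i => LinearEquiv.smulOfNeZero ℝ ℝ _ (inv_ne_zero (ha i)))
      ).toAffineEquiv, fun u => funext fun i => ?_⟩
  show (a i)⁻¹ • L u i = L u i / a i
  rw [smul_eq_mul, div_eq_inv_mul]

theorem stmt16_general (n : ℕ) (R : Set (E n))
    (γ : E n → E n) (hγiso : Isometry γ)
    (hγR : γ '' R = R) (H : Set (E n)) (hH : H ∈ KcalOrtho n R)
    (x : E n) (hx : x ∈ H) (hγx : γ x ∈ H) :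
    γ x = x := by
  obtain ⟨L, a, hL, hLsurj, ha, hLR, H', hH', rfl⟩ := hH
  obtain ⟨Φ, hΦ⟩ := exists_affineEquiv_stretch_comp hL hLsurj fun i => (ha i).ne'
  have hΦR : Φ '' R = closedBall 0 1 := by
    rw [← image_stretch_stdOrtho ha, ← hLR, image_image]
    exact image_congr fun u _ => hΦ u
  let g := Φ.toAffineMap.comp
    (hγiso.affineIsometryOfStrictConvexSpace.toAffineMap.comp Φ.symm.toAffineMap)
  have hg : g '' closedBall 0 1 = closedBall 0 1 := by
    rw [← hΦR]
    calc g '' (Φ '' R) = Φ '' (γ '' R) := by simp [g, image_image]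
      _ = Φ '' R := by rw [hγR]
  obtain ⟨τ, δ, hδ, hgτ⟩ := g.exists_signed_equiv_of_image_closedBall rfl hg
  have hconc : Concordant (Φ x) (Φ (γ x)) := by
    simpa only [hΦ] using concordant_of_mem_Kcal hH' hx hγx
  have hgx : g (Φ x) = Φ (γ x) := by simp [g]
  exact Φ.injective (hconc.eq_of_signed_perm τ hδ fun i => hgx ▸ hgτ (Φ x) i)

/-- If `R` is an `n`-dimensional orthotope, `γ` is a surjective isometry with
`γ(R) = R`, `H ∈ K_n(R)`, `x ∈ H`, and `γ(x) ∈ H`, then `γ(x) = x`. -/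
theorem stmt16 (n : ℕ) (hn : 1 ≤ n) (R : Set (E n)) (hR : IsOrtho n R)
    (γ : E n → E n) (hγiso : Isometry γ) (hγsurj : Surjective γ)
    (hγR : γ '' R = R) (H : Set (E n)) (hH : H ∈ KcalOrtho n R)
    (x : E n) (hx : x ∈ H) (hγx : γ x ∈ H) :
    γ x = x :=
  stmt16_general n R γ hγiso hγR H hH x hx hγx
end
end
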